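/- arXiv:math/0504164 — 10 statements merged into one kernel-verified Lean document; each statement's English description precedes it below -/
import Mathlib

section
/- For the Pascal triangle $a(n,k) = \binom{n}{k}$, and for any fixed $r \ge 0$, the sequence of polynomials $\mathscr{A}_r(n;q) = \sum_{k=r}^n \binom{n}{k} q^k$ (indexed by $n \ge r$) is $q$-log-concave: for all $n > r$, $\mathscr{A}_r(n;q)^2 - \mathscr{A}_r(n-1;q)\mathscr{A}_r(n+1;q)$ has nonnegative coefficients as a polynomial in $q$. -/
open Polynomial Finset

/-!
For `r ≥ 1`, Pascal's rule gives the affine recurrence `𝒜_r(n+1) = (1+q) 𝒜_r(n) + C(n,r-1) q^r`.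
In `𝒜_r(n)^2 - 𝒜_r(n-1) 𝒜_r(n+1)` the `(1+q)`-terms then cancel, leaving
`q^r (C(n-1,r-1) 𝒜_r(n) - C(n,r-1) 𝒜_r(n-1))`, whose coefficients
`C(n-1,r-1) C(n,j) - C(n,r-1) C(n-1,j)` with `j ≥ r` are nonnegative because
`C(n-1,k) / C(n,k) = (n-k)/n` decreases in `k`. For `r = 0` the polynomials are `(1+q)^n` and the
difference vanishes.
-/

theorem Nat.choose_succ_mul_choose_le_of_lt {m a b : ℕ} (hab : a < b) :
    (m + 1).choose a * m.choose b ≤ m.choose a * (m + 1).choose b := by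
  refine Nat.le_of_mul_le_mul_right ?_ m.succ_pos
  calc (m + 1).choose a * m.choose b * (m + 1)
      = (m + 1).choose a * (m + 1).choose b * (m + 1 - b) := by
        rw [mul_assoc, Nat.choose_mul_succ_eq, ← mul_assoc]
    _ ≤ (m + 1).choose a * (m + 1).choose b * (m + 1 - a) := by gcongr
    _ = m.choose a * (m + 1).choose b * (m + 1) := by
        rw [mul_right_comm (m.choose a), Nat.choose_mul_succ_eq, mul_right_comm]

theorem sq_sub_mul_eq_of_recurrence {R : Type*} [CommRing R] {P c : ℕ → R} {a Q : R}
    (h : ∀ n, P (n + 1) = a * P n + c n * Q) (n : ℕ) :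
    P (n + 1) ^ 2 - P n * P (n + 2) = Q * (c n * P (n + 1) - c (n + 1) * P n) := by
  rw [h (n + 1), sq]
  nth_rw 1 [h n]
  ring

/-- The polynomial `𝒜_r(n;q)`. -/
noncomputable def pascalTail (R : Type*) [Semiring R] (r n : ℕ) : R[X] :=
  ∑ k ∈ Icc r n, C (n.choose k : R) * X ^ k

section

variable {R : Type*}

theorem coeff_pascalTail [Semiring R] (r n i : ℕ) :
    (pascalTail R r n).coeff i = if r ≤ i then (n.choose i : R) else 0 := by
  simp only [pascalTail, finsetSum_coeff, coeff_C_mul, coeff_X_pow, mul_ite, mul_one, mul_zero,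
    sum_ite_eq, mem_Icc]
  by_cases hi : i ≤ n
  · simp [hi]
  · simp [hi, Nat.choose_eq_zero_of_lt (not_le.mp hi)]

theorem pascalTail_zero [Semiring R] (n : ℕ) : pascalTail R 0 n = (1 + X) ^ n := by
  ext i
  simp [coeff_pascalTail, coeff_one_add_X_pow]

theorem pascalTail_succ_succ [Semiring R] (r n : ℕ) :
    pascalTail R (r + 1) (n + 1) =
      (1 + X) * pascalTail R (r + 1) n + C (n.choose r : R) * X ^ (r + 1) := by
  ext (_ | i)
  · simp [coeff_pascalTail]
  · simp only [add_mul, one_mul, coeff_add, coeff_X_mul, coeff_C_mul_X_pow, coeff_pascalTail,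
      Nat.choose_succ_succ', Nat.cast_add]
    split_ifs <;> first | omega | simp_all [add_comm]

theorem coeff_pascalTail_sq_sub_mul_nonneg [CommRing R] [PartialOrder R] [IsOrderedRing R]
    (r m t : ℕ) :
    0 ≤ (pascalTail R (r + 1) (m + 1) ^ 2
      - pascalTail R (r + 1) m * pascalTail R (r + 1) (m + 2)).coeff t := by
  rw [sq_sub_mul_eq_of_recurrence (pascalTail_succ_succ r) m, coeff_X_pow_mul']
  split_ifs
  · simp only [coeff_sub, coeff_C_mul, coeff_pascalTail]
    split_ifs with hj
    · rw [sub_nonneg, ← Nat.cast_mul, ← Nat.cast_mul]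
      exact Nat.mono_cast (Nat.choose_succ_mul_choose_le_of_lt (by omega : r < t - (r + 1)))
    · simp
  · rfl

end

/-- For the Pascal triangle, for each fixed `r`, the sequence of
polynomials `𝒜_r(n;q) = ∑_{k=r}^n C(n,k) q^k` (for `n ≥ r`) is q-log-concave:
for all `n > r`, `𝒜_r(n)^2 - 𝒜_r(n-1) * 𝒜_r(n+1)` has nonnegative coefficients. -/
theorem stmt_3 (A : ℕ → ℕ → ℝ[X])
    (hA : ∀ r n : ℕ, A r n = ∑ k ∈ Icc r n, Polynomial.C ((n.choose k : ℝ)) * X ^ k) :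
    ∀ r n : ℕ, r + 1 ≤ n → ∀ t : ℕ,
      0 ≤ ((A r n) ^ 2 - A r (n - 1) * A r (n + 1)).coeff t := by
  obtain rfl : A = pascalTail ℝ := funext₂ hA
  rintro (_ | r) (_ | m) hn t
  · omega
  · simp only [pascalTail_zero, add_tsub_cancel_right]
    ring_nf
    simp
  · omega
  · exact coeff_pascalTail_sq_sub_mul_nonneg r m t
end

section
/- For the Pascal triangle, the identity $\mathscr{A}_r(n;q)^2 - \mathscr{A}_r(n-1;q)\mathscr{A}_r(n+1;q) = \sum_{k=r}^{n} \left[\binom{n-1}{r-1}\binom{n-1}{k-1} - \binom{n-1}{r-2}\binom{n-1}{k}\right] q^{k+r}$ holds for $1 \le r \le n$, where $\mathscr{A}_r(n;q) = \sum_{k=r}^n \binom{n}{k} q^k$, and each coefficient $\binom{n-1}{r-1}\binom{n-1}{k-1} - \binom{n-1}{r-2}\binom{n-1}{k}$ is nonnegative for $r \le k \le n$. -/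
/-!
Pascal's rule gives `𝒜_r(m+1) = (1+q) 𝒜_r(m) + C(m,r-1) q^r`. Substituting it for both
`𝒜_r(n)` and `𝒜_r(n+1)`, the `(1+q)` terms cancel and the difference becomes
`q^r (C(m,r-1) (𝒜_r(m+1) - 𝒜_r(m)) - C(m,r-2) 𝒜_r(m))` with `m = n-1`; Pascal's rule again
expresses `𝒜_r(m+1) - 𝒜_r(m)` coefficientwise. The coefficients are nonnegative because
`k ↦ C(m,k)` is log-concave: `C(m,a) C(m,b+1) ≤ C(m,a+1) C(m,b)` for `a ≤ b`.
Working with `ch`, Pascal's rule holds at every integer index, so the recurrences need no range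
hypotheses.
-/

open Polynomial Finset

/-- Binomial coefficient `C(n, j)` with an integer lower index,
equal to `0` when `j < 0` (and, via `Nat.choose`, when `j > n`). -/
noncomputable def ch (n : ℕ) (j : ℤ) : ℝ :=
  if 0 ≤ j then (n.choose j.toNat : ℝ) else 0

-- Cross-multiplied by `(a+1)(b+1)` this is `(m-b)(a+1) ≤ (m-a)(b+1)`.
theorem Nat.choose_mul_choose_succ_le {m a b : ℕ} (hab : a ≤ b) :
    m.choose a * m.choose (b + 1) ≤ m.choose (a + 1) * m.choose b := by
  have hm : (m - b) * (a + 1) ≤ (m - a) * (b + 1) := by gcongr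
  refine Nat.le_of_mul_le_mul_right (c := (a + 1) * (b + 1)) ?_ (by positivity)
  calc m.choose a * m.choose (b + 1) * ((a + 1) * (b + 1))
      = m.choose a * (m.choose (b + 1) * (b + 1)) * (a + 1) := by ring
    _ = m.choose a * m.choose b * ((m - b) * (a + 1)) := by
        rw [Nat.choose_succ_right_eq]; ring
    _ ≤ m.choose a * m.choose b * ((m - a) * (b + 1)) := by gcongr
    _ = m.choose a * (m - a) * m.choose b * (b + 1) := by ring
    _ = m.choose (a + 1) * m.choose b * ((a + 1) * (b + 1)) := by
        rw [← Nat.choose_succ_right_eq]; ring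

lemma ch_of_neg {n : ℕ} {j : ℤ} (hj : j < 0) : ch n j = 0 := if_neg (not_le.2 hj)

lemma ch_of_lt {n : ℕ} {j : ℤ} (hj : n < j) : ch n j = 0 := by
  rw [ch, if_pos (by omega), Nat.choose_eq_zero_of_lt (by omega), Nat.cast_zero]

lemma ch_natCast (n k : ℕ) : ch n k = n.choose k := by simp [ch]

lemma ch_nonneg (n : ℕ) (j : ℤ) : 0 ≤ ch n j := by
  unfold ch; split <;> positivity

lemma ch_succ (n : ℕ) (j : ℤ) : ch (n + 1) j = ch n j + ch n (j - 1) := by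
  rcases lt_or_ge j 0 with hj | hj
  · rw [ch_of_neg hj, ch_of_neg hj, ch_of_neg (by omega), add_zero]
  lift j to ℕ using hj
  cases j with
  | zero => rw [Nat.cast_zero, zero_sub, ch_of_neg (j := -1) (by norm_num)]; simp [ch]
  | succ k =>
    rw [show ((k + 1 : ℕ) : ℤ) - 1 = k by push_cast; ring, ch_natCast, ch_natCast, ch_natCast,
      Nat.choose_succ_succ', Nat.cast_add, add_comm]

lemma ch_mul_ch_succ_le (m : ℕ) {i j : ℤ} (hij : i ≤ j) :
    ch m i * ch m (j + 1) ≤ ch m (i + 1) * ch m j := by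
  rcases lt_or_ge i 0 with hi | hi
  · rw [ch_of_neg hi, zero_mul]
    exact mul_nonneg (ch_nonneg _ _) (ch_nonneg _ _)
  lift i to ℕ using hi
  lift j to ℕ using by omega
  simp only [← Nat.cast_succ, ch_natCast]
  exact_mod_cast Nat.choose_mul_choose_succ_le (by exact_mod_cast hij)

noncomputable def binomTail (r n : ℕ) : ℝ[X] :=
  ∑ k ∈ Icc r n, C (n.choose k : ℝ) * X ^ k

lemma binomTail_eq_sum_Icc_succ (r n : ℕ) :
    binomTail r n = ∑ k ∈ Icc r (n + 1), C (n.choose k : ℝ) * X ^ k := by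
  refine sum_subset (Icc_subset_Icc_right n.le_succ) fun k hk hkn => ?_
  rw [Nat.choose_eq_zero_of_lt (by simp only [mem_Icc] at hk hkn; omega), Nat.cast_zero, C_0,
    zero_mul]

lemma binomTail_succ_sub (r m : ℕ) :
    binomTail r (m + 1) - binomTail r m = ∑ k ∈ Icc r (m + 1), C (ch m (k - 1)) * X ^ k := by
  rw [binomTail, binomTail_eq_sum_Icc_succ, ← sum_sub_distrib]
  refine sum_congr rfl fun k _ => ?_
  rw [← sub_mul, ← C_sub, ← ch_natCast, ← ch_natCast, ch_succ, add_sub_cancel_left]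

lemma sum_Icc_ch_pred_mul_X_pow (r m : ℕ) :
    ∑ k ∈ Icc r (m + 1), C (ch m (k - 1)) * X ^ k =
      C (ch m (r - 1)) * X ^ r + X * binomTail r m := by
  rcases le_or_gt r (m + 1) with hr | hr
  · rw [← insert_Icc_add_one_left_eq_Icc hr, sum_insert (by simp), ← map_add_right_Icc, sum_map,
      binomTail, mul_sum]
    congr 1
    refine sum_congr rfl fun k _ => ?_
    rw [addRightEmbedding_apply, Nat.cast_add_one, add_sub_cancel_right, ch_natCast, pow_succ]
    ring
  · rw [Icc_eq_empty_of_lt hr, binomTail, Icc_eq_empty_of_lt (by omega), ch_of_lt (by omega)]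
    simp

lemma binomTail_succ (r m : ℕ) :
    binomTail r (m + 1) = (1 + X) * binomTail r m + C (ch m (r - 1)) * X ^ r := by
  linear_combination binomTail_succ_sub r m + sum_Icc_ch_pred_mul_X_pow r m

theorem binomTail_succ_sq_sub_mul (r m : ℕ) :
    binomTail r (m + 1) ^ 2 - binomTail r m * binomTail r (m + 2) =
      ∑ k ∈ Icc r (m + 1),
        C (ch m (r - 1) * ch m (k - 1) - ch m (r - 2) * ch m k) * X ^ (k + r) := by
  have hc : ch (m + 1) (r - 1) = ch m (r - 1) + ch m (r - 2) := by
    rw [ch_succ]; ring_nf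
  have h1 := binomTail_succ r m
  have h2 := binomTail_succ r (m + 1)
  rw [hc, C_add] at h2
  calc binomTail r (m + 1) ^ 2 - binomTail r m * binomTail r (m + 2)
      = X ^ r * (C (ch m (r - 1)) * (binomTail r (m + 1) - binomTail r m)
          - C (ch m (r - 2)) * binomTail r m) := by
        linear_combination (-binomTail r m) * h2 + binomTail r (m + 1) * h1
    _ = _ := by
        rw [binomTail_succ_sub, binomTail_eq_sum_Icc_succ, mul_sum, mul_sum, ← sum_sub_distrib,
          mul_sum]
        refine sum_congr rfl fun k _ => ?_
        rw [C_sub, C_mul, C_mul, ch_natCast, pow_add]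
        ring

/-- For the Pascal triangle, with
`𝒜_r(n;q) = ∑_{k=r}^n C(n,k) q^k`, for `1 ≤ r ≤ n` one has
`𝒜_r(n)^2 - 𝒜_r(n-1) 𝒜_r(n+1)
   = ∑_{k=r}^n [C(n-1,r-1)C(n-1,k-1) - C(n-1,r-2)C(n-1,k)] q^(k+r)`,
and each coefficient in the sum is nonnegative. -/
theorem stmt_4 (A : ℕ → ℕ → ℝ[X])
    (hA : ∀ r n : ℕ, A r n = ∑ k ∈ Icc r n, Polynomial.C ((n.choose k : ℝ)) * X ^ k)
    (r n : ℕ) (hr : 1 ≤ r) (hrn : r ≤ n) :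
    (A r n) ^ 2 - A r (n - 1) * A r (n + 1) =
      ∑ k ∈ Icc r n,
        Polynomial.C (ch (n - 1) ((r : ℤ) - 1) * ch (n - 1) ((k : ℤ) - 1) -
          ch (n - 1) ((r : ℤ) - 2) * ch (n - 1) (k : ℤ)) * X ^ (k + r) ∧
    ∀ k ∈ Icc r n,
      0 ≤ ch (n - 1) ((r : ℤ) - 1) * ch (n - 1) ((k : ℤ) - 1) -
          ch (n - 1) ((r : ℤ) - 2) * ch (n - 1) (k : ℤ) := by
  obtain rfl : A = binomTail := funext₂ hA
  obtain ⟨m, rfl⟩ : ∃ m, n = m + 1 := ⟨n - 1, by omega⟩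
  refine ⟨binomTail_succ_sq_sub_mul r m, fun k hk => sub_nonneg.2 ?_⟩
  have hrk : (r : ℤ) - 2 ≤ k - 1 := by simp only [mem_Icc] at hk; omega
  have := ch_mul_ch_succ_le m hrk
  rwa [sub_add_cancel, show (r : ℤ) - 2 + 1 = r - 1 by ring] at this
end

section
/- If the triangle $\{a(n,k)\}_{0 \le k \le n}$ of nonnegative reals is LC-positive, then for every log-concave sequence $\{x_k\}_{k \ge 0}$ of nonnegative reals, the sequence $z_n = \sum_{k=0}^n a(n,k) x_k$ is log-concave. -/
open Polynomial Finset

/-!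
Put `d_t(r) = x_r x_{t-r} - x_{r-1} x_{t-r+1}` (with `x_{-1} = 0`). Telescoping gives
`x_k x_l = ∑_{r ≤ min k l} d_{k+l}(r)`, and log-concavity of `x` makes `d_t(r) ≥ 0` whenever
`2r ≤ t`. Substituting into
`z_{n+1}^2 - z_n z_{n+2} = ∑_{k,l} (a(n+1,k) a(n+1,l) - a(n,k) a(n+2,l)) x_k x_l`
and collecting terms by `r` and `t = k + l` turns it into
`∑_r ∑_t [q^t] (A_r(n+1)^2 - A_r(n) A_r(n+2)) · d_t(r)`. Every term is nonnegative: the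
coefficient is nonnegative by LC-positivity, and it vanishes for `t < 2r` because `q^r`
divides each `A_r(m)`.
-/

variable {R : Type*}

noncomputable def rowPoly [Semiring R] (p : ℕ → R) (r n : ℕ) : R[X] :=
  ∑ k ∈ Icc r n, C (p k) * X ^ k

lemma X_pow_dvd_rowPoly [CommSemiring R] (p : ℕ → R) (r n : ℕ) : X ^ r ∣ rowPoly p r n :=
  dvd_sum fun _ hk => dvd_mul_of_dvd_right (pow_dvd_pow X (mem_Icc.mp hk).1) _

noncomputable def weightedCoeffSum [CommSemiring R] (g : ℕ → R) : R[X] →ₗ[R] R :=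
  lsum fun t => LinearMap.lsmul R R (g t)

section WeightedCoeffSum

variable [CommSemiring R] (g : ℕ → R)

lemma weightedCoeffSum_apply (P : R[X]) :
    weightedCoeffSum g P = ∑ t ∈ P.support, g t * P.coeff t := rfl

lemma weightedCoeffSum_C_mul_X_pow (c : R) (t : ℕ) :
    weightedCoeffSum g (C c * X ^ t) = g t * c := by
  simp [weightedCoeffSum, C_mul_X_pow_eq_monomial]

lemma weightedCoeffSum_rowPoly_mul (p q : ℕ → R) (r n m : ℕ) :
    weightedCoeffSum g (rowPoly p r n * rowPoly q r m) =
      ∑ k ∈ Icc r n, ∑ l ∈ Icc r m, g (k + l) * (p k * q l) := by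
  simp only [rowPoly, sum_mul_sum, map_sum]
  refine sum_congr rfl fun k _ => sum_congr rfl fun l _ => ?_
  rw [mul_mul_mul_comm, ← C_mul, ← pow_add, weightedCoeffSum_C_mul_X_pow]

variable {g} [PartialOrder R] [IsOrderedRing R]

lemma weightedCoeffSum_nonneg {P : R[X]} (hP : ∀ t, 0 ≤ P.coeff t)
    (hg : ∀ t, P.coeff t ≠ 0 → 0 ≤ g t) : 0 ≤ weightedCoeffSum g P := by
  rw [weightedCoeffSum_apply]
  exact sum_nonneg fun t ht => mul_nonneg (hg t (mem_support_iff.mp ht)) (hP t)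

end WeightedCoeffSum

def lcDefect [Ring R] (x : ℕ → R) (t r : ℕ) : R :=
  x r * x (t - r) - if r = 0 then 0 else x (r - 1) * x (t - r + 1)

section LcDefect

variable [CommRing R] (x : ℕ → R)

lemma sum_range_lcDefect {t m : ℕ} (h : m ≤ t) :
    ∑ r ∈ range (m + 1), lcDefect x t r = x m * x (t - m) := by
  induction m with
  | zero => simp [lcDefect]
  | succ m ih =>
    rw [sum_range_succ, ih (by omega), lcDefect, if_neg (by omega), Nat.add_sub_cancel,
      show t - (m + 1) + 1 = t - m by omega]
    ring

lemma mul_eq_sum_lcDefect {k l N : ℕ} (h : min k l < N) :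
    x k * x l = ∑ r ∈ range N, if r ≤ k ∧ r ≤ l then lcDefect x (k + l) r else 0 := by
  rw [← sum_filter, show {r ∈ range N | r ≤ k ∧ r ≤ l} = range (min k l + 1) by
    ext r; simp only [mem_filter, mem_range]; omega, sum_range_lcDefect x (by omega)]
  rcases le_total k l with hkl | hkl
  · rw [min_eq_left hkl, Nat.add_sub_cancel_left]
  · rw [min_eq_right hkl, Nat.add_sub_cancel, mul_comm]

lemma sum_mul_sum_eq_sum_weightedCoeffSum (p q : ℕ → R) {n m N : ℕ} (h : min n m < N) :
    (∑ k ∈ range (n + 1), p k * x k) * (∑ l ∈ range (m + 1), q l * x l) =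
      ∑ r ∈ range N, weightedCoeffSum (lcDefect x · r) (rowPoly p r n * rowPoly q r m) := by
  have hIcc : ∀ r n, {k ∈ range (n + 1) | r ≤ k} = Icc r n := fun r n => by
    ext k; simp only [mem_filter, mem_range, mem_Icc]; omega
  calc (∑ k ∈ range (n + 1), p k * x k) * (∑ l ∈ range (m + 1), q l * x l)
      = ∑ k ∈ range (n + 1), ∑ l ∈ range (m + 1), ∑ r ∈ range N,
          if r ≤ k ∧ r ≤ l then lcDefect x (k + l) r * (p k * q l) else 0 := by
        rw [sum_mul_sum]
        refine sum_congr rfl fun k hk => sum_congr rfl fun l hl => ?_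
        simp only [mem_range] at hk hl
        rw [mul_mul_mul_comm, mul_comm, mul_eq_sum_lcDefect x (N := N) (by omega), sum_mul]
        exact sum_congr rfl fun r _ => by rw [ite_mul, zero_mul]
    _ = ∑ r ∈ range N, ∑ k ∈ Icc r n, ∑ l ∈ Icc r m, lcDefect x (k + l) r * (p k * q l) := by
        rw [← sum_product', sum_comm]
        refine sum_congr rfl fun r _ => ?_
        rw [← sum_filter, filter_product (p := (r ≤ ·)) (q := (r ≤ ·)), hIcc, hIcc]
        exact sum_product _ _ _
    _ = _ := sum_congr rfl fun r _ => (weightedCoeffSum_rowPoly_mul (lcDefect x · r) p q r n m).symm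

end LcDefect

section LogConcave

variable [Field R] [LinearOrder R] [IsStrictOrderedRing R] {x : ℕ → R}
  (hx : ∀ k, 0 ≤ x k) (hlc : ∀ k, x k * x (k + 2) ≤ x (k + 1) ^ 2)
  (hniz : ∀ i j k, i < j → j < k → x i ≠ 0 → x k ≠ 0 → x j ≠ 0)
include hx hlc hniz

lemma mul_succ_le_succ_mul_of_logConcave {i j : ℕ} (hij : i ≤ j) :
    x i * x (j + 1) ≤ x (i + 1) * x j := by
  obtain ⟨m, rfl⟩ := Nat.exists_eq_add_of_le hij
  clear hij
  induction m generalizing i with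
  | zero => rw [add_zero, mul_comm]
  | succ m ih =>
    have ih' : x (i + 1) * x (i + m + 2) ≤ x (i + 2) * x (i + m + 1) := by
      have := ih (i := i + 1)
      rwa [add_right_comm i 1 m] at this
    rw [show i + (m + 1) + 1 = i + m + 2 by omega, show i + (m + 1) = i + m + 1 by omega]
    by_cases h1 : x (i + 1) = 0
    · have : x i = 0 ∨ x (i + m + 2) = 0 := by
        by_contra! h
        exact hniz i (i + 1) (i + m + 2) (by omega) (by omega) h.1 h.2 h1
      rcases this with h | h <;> simp [h, h1]
    by_cases h2 : x (i + 2) = 0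
    · have : x (i + m + 2) = 0 := by
        obtain rfl | hm := m.eq_zero_or_pos
        · exact h2
        by_contra h
        exact hniz (i + 1) (i + 2) (i + m + 2) (by omega) (by omega) h1 h h2
      simpa [this] using mul_nonneg (hx (i + 1)) (hx (i + m + 1))
    have hpos : 0 < x (i + 1) * x (i + 2) :=
      mul_pos ((hx _).lt_of_ne' h1) ((hx _).lt_of_ne' h2)
    refine le_of_mul_le_mul_left ?_ hpos
    calc x (i + 1) * x (i + 2) * (x i * x (i + m + 2))
        = (x i * x (i + 2)) * (x (i + 1) * x (i + m + 2)) := by ring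
      _ ≤ x (i + 1) ^ 2 * (x (i + 2) * x (i + m + 1)) :=
          mul_le_mul (hlc i) ih' (mul_nonneg (hx _) (hx _)) (sq_nonneg _)
      _ = x (i + 1) * x (i + 2) * (x (i + 1) * x (i + m + 1)) := by ring

lemma lcDefect_nonneg {t r : ℕ} (h : 2 * r ≤ t) : 0 ≤ lcDefect x t r := by
  unfold lcDefect
  split_ifs with hr
  · simpa using mul_nonneg (hx r) (hx (t - r))
  · have := mul_succ_le_succ_mul_of_logConcave hx hlc hniz (i := r - 1) (j := t - r) (by omega)
    rw [Nat.sub_add_cancel (by omega)] at this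
    exact sub_nonneg.mpr this

end LogConcave

theorem stmt_5_general (a : ℕ → ℕ → ℝ)
    (A : ℕ → ℕ → ℝ[X])
    (hA : ∀ r n : ℕ, A r n = ∑ k ∈ Icc r n, Polynomial.C (a n k) * X ^ k)
    (hLC : ∀ r n : ℕ, 1 ≤ n → ∀ t : ℕ,
      0 ≤ ((A r n) ^ 2 - A r (n - 1) * A r (n + 1)).coeff t)
    (x : ℕ → ℝ)
    (hxnonneg : ∀ k, 0 ≤ x k)
    (hxlc : ∀ k : ℕ, x k * x (k + 2) ≤ x (k + 1) ^ 2)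
    (hxniz : ∀ i j k : ℕ, i < j → j < k → x i ≠ 0 → x k ≠ 0 → x j ≠ 0)
    (z : ℕ → ℝ)
    (hz : ∀ n : ℕ, z n = ∑ k ∈ Finset.range (n + 1), a n k * x k) :
    ∀ n : ℕ, z n * z (n + 2) ≤ z (n + 1) ^ 2 := by
  intro n
  have hrow : ∀ r m, A r m = rowPoly (a m) r m := hA
  rw [← sub_nonneg, hz, hz, hz, sq,
    sum_mul_sum_eq_sum_weightedCoeffSum x _ _ (N := n + 2) (by omega),
    sum_mul_sum_eq_sum_weightedCoeffSum x _ _ (N := n + 2) (by omega), ← sum_sub_distrib]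
  refine sum_nonneg fun r _ => ?_
  simp only [← map_sub, ← hrow, ← sq]
  have hdvd : X ^ (2 * r) ∣ A r (n + 1) ^ 2 - A r n * A r (n + 2) := by
    simp only [two_mul, pow_add, sq, hrow]
    exact dvd_sub (mul_dvd_mul (X_pow_dvd_rowPoly ..) (X_pow_dvd_rowPoly ..))
      (mul_dvd_mul (X_pow_dvd_rowPoly ..) (X_pow_dvd_rowPoly ..))
  refine weightedCoeffSum_nonneg (fun t => ?_) fun t ht => lcDefect_nonneg hxnonneg hxlc hxniz ?_
  · simpa using hLC r (n + 1) (by omega) t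
  · by_contra! ht'
    exact ht (X_pow_dvd_iff.mp hdvd t ht')

/-- Theorem 1: LC-positive triangles are PLC: if the triangle
`{a n k}` of nonnegative reals is LC-positive, then for every nonnegative
log-concave sequence `x` (with no internal zeros), the sequence
`z n = ∑_{k=0}^n a n k * x k` is log-concave. -/
theorem stmt_5 (a : ℕ → ℕ → ℝ)
    (hanonneg : ∀ n k : ℕ, k ≤ n → 0 ≤ a n k)
    (ha0 : ∀ n k : ℕ, n < k → a n k = 0)
    (A : ℕ → ℕ → ℝ[X])
    (hA : ∀ r n : ℕ, A r n = ∑ k ∈ Icc r n, Polynomial.C (a n k) * X ^ k)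
    (hLC : ∀ r n : ℕ, 1 ≤ n → ∀ t : ℕ,
      0 ≤ ((A r n) ^ 2 - A r (n - 1) * A r (n + 1)).coeff t)
    (x : ℕ → ℝ)
    (hxnonneg : ∀ k, 0 ≤ x k)
    (hxlc : ∀ k : ℕ, x k * x (k + 2) ≤ x (k + 1) ^ 2)
    (hxniz : ∀ i j k : ℕ, i < j → j < k → x i ≠ 0 → x k ≠ 0 → x j ≠ 0)
    (z : ℕ → ℝ)
    (hz : ∀ n : ℕ, z n = ∑ k ∈ Finset.range (n + 1), a n k * x k) :
    ∀ n : ℕ, z n * z (n + 2) ≤ z (n + 1) ^ 2 :=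
  stmt_5_general a A hA hLC x hxnonneg hxlc hxniz z hz
end

section
/- Let $\{a(n,k)\}_{0 \le k \le n}$ be a double LC-positive triangle of nonnegative reals and $\{y_k\}_{k \ge 0}$ a log-concave sequence of nonnegative reals with no internal zeros. Then the triangle $c(n,k) = a(n,k)y_{n-k}$ is LC-positive, and $C_r(n,t) \ge A_r(n,t)\, y_{n-t+r}\, y_{n-r}$ for all $2r \le t \le \min(2n, n+r)$. -/
/-!
Write `p i = a(n,i) a(n,t-i)`, `q i = a(n-1,i) a(n+1,t-i)` and `Y i = y(n-i) y(n-t+i)`. The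
`t`-th coefficient of `A_r(n)^2 - A_r(n-1) A_r(n+1)` is `∑_{i=r}^{t-r} (p i - q i)`, the one for
`C` is `∑_{i=r}^{t-r} (p i Y i - q i Y (i+1))`. Summation by parts turns the latter into
`∑ u i Y i` plus boundary terms, where `u i = p i - q (i-1)` and `q (-1) = 0`. After the
reflection `k ↦ n - k`, the sums of `u` over the symmetric windows `[s, t-s]` are
`(2n-t)`-th coefficients of the LC-differences of the reciprocal triangle, hence nonnegative.
Log-concavity of `y` without internal zeros makes `Y` symmetric about `t/2` and increasing towards
the middle, so Abel's inequality gives `∑ u i Y i ≥ Y r ∑ u i`, and comparing the boundary terms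
yields `C_r(n,t) ≥ Y r A_r(n,t)`. For `t > n + r`, `u` vanishes below `t - n` and the same
argument starts there.
-/

open Polynomial Finset

theorem coeff_sum_Icc_C_mul_X_pow {f : ℕ → ℝ} {r N : ℕ} (hf : ∀ k, N < k → f k = 0) (j : ℕ) :
    (∑ k ∈ Icc r N, C (f k) * X ^ k).coeff j = if r ≤ j then f j else 0 := by
  rw [finsetSum_coeff]
  simp only [coeff_C_mul_X_pow, sum_ite_eq, mem_Icc]
  by_cases hj : j ≤ N
  · simp [hj]
  · simp [hj, hf j (by omega)]

theorem coeff_sum_Icc_mul_sum_Icc {f g : ℕ → ℝ} {r N M : ℕ} (hf : ∀ k, N < k → f k = 0)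
    (hg : ∀ k, M < k → g k = 0) (t : ℕ) :
    ((∑ k ∈ Icc r N, C (f k) * X ^ k) * ∑ k ∈ Icc r M, C (g k) * X ^ k).coeff t =
      ∑ i ∈ Icc r (t - r), f i * g (t - i) := by
  rw [coeff_mul, Nat.sum_antidiagonal_eq_sum_range_succ_mk]
  simp only [coeff_sum_Icc_C_mul_X_pow hf, coeff_sum_Icc_C_mul_X_pow hg]
  symm
  refine sum_subset_zero_on_sdiff (fun i hi => ?_) (fun i hi => ?_) (fun i hi => ?_)
  · simp only [mem_Icc, mem_range] at hi ⊢; omega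
  · simp only [mem_sdiff, mem_Icc, mem_range] at hi
    rcases le_or_gt r i with h | h
    · rw [if_neg (by omega : ¬r ≤ t - i), mul_zero]
    · rw [if_neg (by omega : ¬r ≤ i), zero_mul]
  · simp only [mem_Icc] at hi
    rw [if_pos hi.1, if_pos (by omega)]

theorem coeff_sq_sub_mul_eq_sum {b : ℕ → ℕ → ℝ} (hb : ∀ n k, n < k → b n k = 0)
    {P : ℕ → ℕ → ℝ[X]} (hP : ∀ r n, P r n = ∑ k ∈ Icc r n, C (b n k) * X ^ k) (r n t : ℕ) :
    (P r n ^ 2 - P r (n - 1) * P r (n + 1)).coeff t =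
      ∑ i ∈ Icc r (t - r), (b n i * b n (t - i) - b (n - 1) i * b (n + 1) (t - i)) := by
  simp only [hP, sq, coeff_sub, sum_sub_distrib,
    coeff_sum_Icc_mul_sum_Icc (hb n) (hb n), coeff_sum_Icc_mul_sum_Icc (hb (n - 1)) (hb (n + 1))]

/-- `a*(n,k) = a(n,n-k)`, set to `0` for `k > n`, where `ℕ`-subtraction would give `a(n,0)`. -/
def reciprocalTriangle (a : ℕ → ℕ → ℝ) (n k : ℕ) : ℝ := if k ≤ n then a n (n - k) else 0

theorem reciprocalTriangle_of_le {a : ℕ → ℕ → ℝ} {n k : ℕ} (h : k ≤ n) :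
    reciprocalTriangle a n k = a n (n - k) := if_pos h

theorem reciprocalTriangle_of_lt (a : ℕ → ℕ → ℝ) {n k : ℕ} (h : n < k) :
    reciprocalTriangle a n k = 0 := if_neg (by omega)

theorem coeff_reciprocal_sq_sub_mul_eq_sum {a : ℕ → ℕ → ℝ} {P : ℕ → ℕ → ℝ[X]}
    (hP : ∀ r n, P r n = ∑ k ∈ Icc r n, C (a n (n - k)) * X ^ k)
    {n s t : ℕ} (hn : 1 ≤ n) (hst : 2 * s ≤ t) (htn : t ≤ n + s) :
    (P (n + s - t) n ^ 2 - P (n + s - t) (n - 1) * P (n + s - t) (n + 1)).coeff (2 * n - t) =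
      ∑ i ∈ Icc s (t - s), (a n i * a n (t - i) -
        if i = 0 then 0 else a (n - 1) (i - 1) * a (n + 1) (t - (i - 1))) := by
  have hP' : ∀ r m, P r m = ∑ k ∈ Icc r m, C (reciprocalTriangle a m k) * X ^ k := fun r m => by
    rw [hP]
    exact sum_congr rfl fun k hk => by rw [reciprocalTriangle_of_le (mem_Icc.mp hk).2]
  rw [coeff_sq_sub_mul_eq_sum (fun m k => reciprocalTriangle_of_lt a) hP']
  refine sum_nbij' (n - ·) (n - ·) (fun k hk => ?_) (fun i hi => ?_) (fun k hk => ?_)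
    (fun i hi => ?_) (fun k hk => ?_) <;> simp only [mem_Icc] at * <;> try omega
  rw [reciprocalTriangle_of_le (by omega), reciprocalTriangle_of_le (by omega),
    show n - (2 * n - t - k) = t - (n - k) by omega]
  by_cases hk : n - k = 0
  · rw [if_pos hk, reciprocalTriangle_of_lt a (n := n - 1) (k := k) (by omega), zero_mul]
  · rw [if_neg hk, reciprocalTriangle_of_le (by omega), reciprocalTriangle_of_le (by omega),
      show n - 1 - k = n - k - 1 by omega, show n + 1 - (2 * n - t - k) = t - (n - k - 1) by omega]

theorem window_sum_nonneg_of_reciprocal_lc {a : ℕ → ℕ → ℝ} {P : ℕ → ℕ → ℝ[X]}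
    (hP : ∀ r n, P r n = ∑ k ∈ Icc r n, C (a n (n - k)) * X ^ k)
    (hLC : ∀ r n, 1 ≤ n → ∀ t, 0 ≤ (P r n ^ 2 - P r (n - 1) * P r (n + 1)).coeff t)
    {n s t : ℕ} (hn : 1 ≤ n) (htn : t ≤ n + s) :
    0 ≤ ∑ i ∈ Icc s (t - s), (a n i * a n (t - i) -
      if i = 0 then 0 else a (n - 1) (i - 1) * a (n + 1) (t - (i - 1))) := by
  rcases le_or_gt (2 * s) t with hst | hst
  · rw [← coeff_reciprocal_sq_sub_mul_eq_sum hP hn hst htn]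
    exact hLC _ n hn _
  · rw [Icc_eq_empty (by omega), sum_empty]

theorem mul_le_mul_succ_of_logConcave {y : ℕ → ℝ} (hy : ∀ k, 0 ≤ y k)
    (hlc : ∀ k, y k * y (k + 2) ≤ y (k + 1) ^ 2)
    (hniz : ∀ i j k, i < j → j < k → y i ≠ 0 → y k ≠ 0 → y j ≠ 0) {i j : ℕ} (hij : i ≤ j) :
    y i * y (j + 1) ≤ y (i + 1) * y j := by
  induction j, hij using Nat.le_induction with
  | base => rw [mul_comm]
  | succ j hij ih =>
    rcases (hy (j + 1)).eq_or_lt with hj | hj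
    · have : y i = 0 ∨ y (j + 2) = 0 := by
        by_contra! h
        exact hniz i (j + 1) (j + 2) (by omega) (by omega) h.1 h.2 hj.symm
      rcases this with h | h <;> simp [h, ← hj]
    · refine le_of_mul_le_mul_right ?_ hj
      nlinarith [mul_le_mul_of_nonneg_right ih (hy (j + 2)),
        mul_le_mul_of_nonneg_left (hlc j) (hy (i + 1))]

/-- `c(n,i) c(n,t-i) = a(n,i) a(n,t-i) * lcWeight y n t i` for `i ≤ t`. -/
def lcWeight (y : ℕ → ℝ) (n t j : ℕ) : ℝ := y (n - j) * y (n + j - t)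

theorem lcWeight_nonneg {y : ℕ → ℝ} (hy : ∀ k, 0 ≤ y k) (n t j : ℕ) : 0 ≤ lcWeight y n t j :=
  mul_nonneg (hy _) (hy _)

theorem lcWeight_sub (y : ℕ → ℝ) {n t s : ℕ} (hs : s ≤ t) :
    lcWeight y n t (t - s) = lcWeight y n t s := by
  rw [lcWeight, lcWeight, show n - (t - s) = n + s - t by omega,
    show n + (t - s) - t = n - s by omega, mul_comm]

theorem lcWeight_le_succ {y : ℕ → ℝ} (hy : ∀ i j, i ≤ j → y i * y (j + 1) ≤ y (i + 1) * y j)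
    {n t s : ℕ} (hts : t ≤ n + s) (hst : 2 * s + 1 ≤ t) :
    lcWeight y n t s ≤ lcWeight y n t (s + 1) := by
  have := hy (n + s - t) (n - s - 1) (by omega)
  rw [show n - s - 1 + 1 = n - s by omega] at this
  rw [lcWeight, lcWeight, show n - (s + 1) = n - s - 1 by omega,
    show n + (s + 1) - t = n + s - t + 1 by omega]
  linarith [mul_comm (y (n - s)) (y (n + s - t)), mul_comm (y (n - s - 1)) (y (n + s - t + 1))]

theorem lcWeight_sub_add_one_le {y : ℕ → ℝ}
    (hy : ∀ i j, i ≤ j → y i * y (j + 1) ≤ y (i + 1) * y j)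
    {n t r : ℕ} (htr : t < n + r) (hrt : 2 * r ≤ t) :
    lcWeight y n t (t - r + 1) ≤ lcWeight y n t r := by
  have := hy (n + r - t - 1) (n - r) (by omega)
  rw [show n + r - t - 1 + 1 = n + r - t by omega] at this
  rw [lcWeight, lcWeight, show n - (t - r + 1) = n + r - t - 1 by omega,
    show n + (t - r + 1) - t = n - r + 1 by omega]
  linarith [mul_comm (y (n - r)) (y (n + r - t))]

theorem coeff_weighted_sq_sub_mul_eq_sum {a : ℕ → ℕ → ℝ} (ha0 : ∀ n k, n < k → a n k = 0)
    (y : ℕ → ℝ) {P : ℕ → ℕ → ℝ[X]}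
    (hP : ∀ r n, P r n = ∑ k ∈ Icc r n, C (a n k * y (n - k)) * X ^ k) (r n t : ℕ) :
    (P r n ^ 2 - P r (n - 1) * P r (n + 1)).coeff t =
      ∑ i ∈ Icc r (t - r), (a n i * a n (t - i) * lcWeight y n t i -
        a (n - 1) i * a (n + 1) (t - i) * lcWeight y n t (i + 1)) := by
  rw [coeff_sq_sub_mul_eq_sum (b := fun n k => a n k * y (n - k))
    (fun n k h => by rw [ha0 n k h, zero_mul]) hP]
  refine sum_congr rfl fun i hi => ?_
  simp only [mem_Icc] at hi
  rw [lcWeight, lcWeight, show n - (t - i) = n + i - t by omega,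
    show n - 1 - i = n - (i + 1) by omega, show n + 1 - (t - i) = n + (i + 1) - t by omega]
  ring

theorem sum_Icc_mul_sub_mul_succ (p q q' Y : ℕ → ℝ) (hq : ∀ i, q' (i + 1) = q i) {r m : ℕ}
    (h : r ≤ m) :
    ∑ i ∈ Icc r m, (p i * Y i - q i * Y (i + 1)) =
      ∑ i ∈ Icc r m, (p i - q' i) * Y i + q' r * Y r - q m * Y (m + 1) := by
  induction m, h using Nat.le_induction with
  | base => simp only [Icc_self, sum_singleton]; ring
  | succ m hrm ih =>
    rw [sum_Icc_succ_top (by omega), sum_Icc_succ_top (by omega), ih, hq]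
    ring

theorem mul_sum_le_sum_mul_of_window_nonneg (u Y : ℕ → ℝ) (t R : ℕ)
    (hu : ∀ s, R < s → 0 ≤ ∑ i ∈ Icc s (t - s), u i)
    (hmono : ∀ s, R ≤ s → 2 * s + 1 ≤ t → Y s ≤ Y (s + 1))
    (hsymm : ∀ s, R ≤ s → 2 * s ≤ t → Y (t - s) = Y s) :
    Y R * ∑ i ∈ Icc R (t - R), u i ≤ ∑ i ∈ Icc R (t - R), u i * Y i := by
  suffices ∀ d s, R ≤ s → t ≤ 2 * s + d →
      Y s * ∑ i ∈ Icc s (t - s), u i ≤ ∑ i ∈ Icc s (t - s), u i * Y i from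
    this t R le_rfl (by omega)
  intro d
  induction d with
  | zero =>
    intro s _ hts
    rcases (show t - s < s ∨ t - s = s by omega) with h | h
    · simp [Icc_eq_empty_of_lt h]
    · simp [h, mul_comm]
  | succ d ih =>
    intro s hs hts
    rcases le_or_gt t (2 * s + d) with h | h
    · exact ih s hs h
    have hsplit : ∀ f : ℕ → ℝ, ∑ i ∈ Icc s (t - s), f i =
        f s + ∑ i ∈ Icc (s + 1) (t - (s + 1)), f i + f (t - s) := by
      intro f
      rw [← insert_Icc_add_one_left_eq_Icc (by omega), sum_insert (by simp),
        show t - s = t - (s + 1) + 1 by omega, sum_Icc_succ_top (by omega)]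
      ring
    rw [hsplit, hsplit, hsymm s hs (by omega)]
    have := ih (s + 1) (by omega) (by omega)
    have := mul_le_mul_of_nonneg_right (hmono s hs (by omega)) (hu (s + 1) (by omega))
    linarith

theorem mul_sum_sub_le_sum_mul_sub_mul_succ (p q q' Y : ℕ → ℝ) (hq : ∀ i, q' (i + 1) = q i)
    {r t : ℕ} (hrt : 2 * r ≤ t)
    (hu : ∀ s, r < s → 0 ≤ ∑ i ∈ Icc s (t - s), (p i - q' i))
    (hmono : ∀ s, r ≤ s → 2 * s + 1 ≤ t → Y s ≤ Y (s + 1))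
    (hsymm : ∀ s, r ≤ s → 2 * s ≤ t → Y (t - s) = Y s)
    (hbdry : q (t - r) * Y (t - r + 1) ≤ q (t - r) * Y r) :
    Y r * ∑ i ∈ Icc r (t - r), (p i - q i) ≤
      ∑ i ∈ Icc r (t - r), (p i * Y i - q i * Y (i + 1)) := by
  have habel := mul_sum_le_sum_mul_of_window_nonneg (fun i => p i - q' i) Y t r hu hmono hsymm
  have hA := sum_Icc_mul_sub_mul_succ p q q' (fun _ => 1) hq (show r ≤ t - r by omega)
  simp only [mul_one] at hA
  rw [sum_Icc_mul_sub_mul_succ p q q' Y hq (by omega), hA]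
  linear_combination habel + hbdry

theorem sum_mul_sub_mul_succ_nonneg (p q q' Y : ℕ → ℝ) (hq : ∀ i, q' (i + 1) = q i)
    {r R t : ℕ} (hrt : 2 * r ≤ t) (hrR : r ≤ R)
    (hout : ∀ i, r ≤ i → i ≤ t - r → i < R ∨ t - R < i → p i - q' i = 0)
    (hu : ∀ s, R ≤ s → 0 ≤ ∑ i ∈ Icc s (t - s), (p i - q' i))
    (hmono : ∀ s, R ≤ s → 2 * s + 1 ≤ t → Y s ≤ Y (s + 1))
    (hsymm : ∀ s, R ≤ s → 2 * s ≤ t → Y (t - s) = Y s)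
    (hY : 0 ≤ Y R) (hfirst : 0 ≤ q' r * Y r) (hlast : q (t - r) = 0) :
    0 ≤ ∑ i ∈ Icc r (t - r), (p i * Y i - q i * Y (i + 1)) := by
  rw [sum_Icc_mul_sub_mul_succ p q q' Y hq (by omega), hlast, zero_mul, sub_zero]
  have hshrink : ∑ i ∈ Icc R (t - R), (p i - q' i) * Y i =
      ∑ i ∈ Icc r (t - r), (p i - q' i) * Y i := by
    refine sum_subset (Icc_subset_Icc hrR (by omega)) fun i hi hni => ?_
    simp only [mem_Icc, not_and_or, not_le] at hi hni
    rw [hout i hi.1 hi.2 hni, zero_mul]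
  have habel := mul_sum_le_sum_mul_of_window_nonneg (fun i => p i - q' i) Y t R
    (fun s hs => hu s hs.le) hmono hsymm
  rw [← hshrink]
  nlinarith [mul_nonneg hY (hu R le_rfl)]

theorem mul_sub_shifted_mul_eq_zero {a : ℕ → ℕ → ℝ} (ha0 : ∀ n k, n < k → a n k = 0)
    {n t i : ℕ} (hn : 1 ≤ n) (hi : i < t - n ∨ n < i) :
    (a n i * a n (t - i) -
      if i = 0 then 0 else a (n - 1) (i - 1) * a (n + 1) (t - (i - 1))) = 0 := by
  rcases hi with hi | hi
  · rw [ha0 n (t - i) (by omega)]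
    split_ifs
    · ring
    · rw [ha0 (n + 1) (t - (i - 1)) (by omega)]; ring
  · rw [ha0 n i hi, if_neg (by omega), ha0 (n - 1) (i - 1) (by omega)]; ring

/-- Proposition 2.4 (ii): if `{a n k}` is double LC-positive and
`y` is a nonnegative log-concave sequence (no internal zeros), then
`c n k = a n k * y (n-k)` is LC-positive, and
`C_r(n,t) ≥ A_r(n,t) * y (n-t+r) * y (n-r)` for `2r ≤ t ≤ min(2n, n+r)`. -/
theorem stmt_8 (a : ℕ → ℕ → ℝ)
    (hanonneg : ∀ n k : ℕ, k ≤ n → 0 ≤ a n k)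
    (ha0 : ∀ n k : ℕ, n < k → a n k = 0)
    (y : ℕ → ℝ)
    (hynonneg : ∀ k, 0 ≤ y k)
    (hylc : ∀ k : ℕ, y k * y (k + 2) ≤ y (k + 1) ^ 2)
    (hyniz : ∀ i j k : ℕ, i < j → j < k → y i ≠ 0 → y k ≠ 0 → y j ≠ 0)
    (A Astar C : ℕ → ℕ → ℝ[X])
    (hA : ∀ r n : ℕ, A r n = ∑ k ∈ Icc r n, Polynomial.C (a n k) * X ^ k)
    (hAstar : ∀ r n : ℕ, Astar r n = ∑ k ∈ Icc r n, Polynomial.C (a n (n - k)) * X ^ k)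
    (hC : ∀ r n : ℕ, C r n = ∑ k ∈ Icc r n, Polynomial.C (a n k * y (n - k)) * X ^ k)
    (hLC : ∀ r n : ℕ, 1 ≤ n → ∀ t : ℕ,
      0 ≤ ((A r n) ^ 2 - A r (n - 1) * A r (n + 1)).coeff t)
    (hLCstar : ∀ r n : ℕ, 1 ≤ n → ∀ t : ℕ,
      0 ≤ ((Astar r n) ^ 2 - Astar r (n - 1) * Astar r (n + 1)).coeff t) :
    ∀ r n t : ℕ, 1 ≤ n →
      (0 ≤ ((C r n) ^ 2 - C r (n - 1) * C r (n + 1)).coeff t) ∧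
      (2 * r ≤ t → t ≤ 2 * n → t ≤ n + r →
        ((A r n) ^ 2 - A r (n - 1) * A r (n + 1)).coeff t *
            (y (n + r - t) * y (n - r)) ≤
          ((C r n) ^ 2 - C r (n - 1) * C r (n + 1)).coeff t) := by
  intro r n t hn
  have ha : ∀ m k, 0 ≤ a m k := fun m k =>
    (le_or_gt k m).elim (hanonneg m k) fun h => (ha0 m k h).ge
  have hy := fun i j (h : i ≤ j) => mul_le_mul_succ_of_logConcave hynonneg hylc hyniz h
  have hY := lcWeight_nonneg hynonneg n t
  set p : ℕ → ℝ := fun i => a n i * a n (t - i)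
  set q : ℕ → ℝ := fun i => a (n - 1) i * a (n + 1) (t - i)
  set q' : ℕ → ℝ := fun i => if i = 0 then 0 else a (n - 1) (i - 1) * a (n + 1) (t - (i - 1))
  have hq : ∀ i, q' (i + 1) = q i := fun i => by simp [q, q']
  have hq_nonneg : ∀ i, 0 ≤ q i := fun i => mul_nonneg (ha _ _) (ha _ _)
  have hwin := fun s (hs : t ≤ n + s) => window_sum_nonneg_of_reciprocal_lc hAstar hLCstar hn hs
  have hAnn := hLC r n hn t
  rw [coeff_sq_sub_mul_eq_sum ha0 hA] at hAnn ⊢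
  rw [coeff_weighted_sq_sub_mul_eq_sum ha0 y hC]
  rcases lt_or_ge t (2 * r) with ht | ht
  · rw [Icc_eq_empty (by omega), sum_empty]
    exact ⟨le_rfl, fun h => absurd h (by omega)⟩
  rcases le_or_gt t (n + r) with htr | htr
  · have hbdry : q (t - r) * lcWeight y n t (t - r + 1) ≤ q (t - r) * lcWeight y n t r := by
      rcases htr.lt_or_eq with htr | rfl
      · exact mul_le_mul_of_nonneg_left (lcWeight_sub_add_one_le hy htr ht) (hq_nonneg _)
      · simp only [q, ha0 (n - 1) (n + r - r) (by omega), zero_mul, le_refl]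
    have key := mul_sum_sub_le_sum_mul_sub_mul_succ p q q' (lcWeight y n t) hq ht
      (fun s hs => hwin s (by omega)) (fun s hs => lcWeight_le_succ hy (by omega))
      (fun s _ _ => lcWeight_sub y (by omega)) hbdry
    refine ⟨(mul_nonneg (hY r) hAnn).trans key, fun _ _ _ => ?_⟩
    rwa [mul_comm, lcWeight, mul_comm (y (n - r))] at key
  · have hfirst : 0 ≤ q' r * lcWeight y n t r := by
      rcases r with _ | r
      · simp [q']
      · exact mul_nonneg (hq r ▸ hq_nonneg r) (hY _)
    have hlast : q (t - r) = 0 := by simp only [q, ha0 (n - 1) (t - r) (by omega), zero_mul]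
    refine ⟨sum_mul_sub_mul_succ_nonneg p q q' (lcWeight y n t) hq (R := t - n) ht (by omega)
      (fun i _ _ hi => mul_sub_shifted_mul_eq_zero ha0 hn (by omega))
      (fun s hs => hwin s (by omega)) (fun s hs => lcWeight_le_succ hy (by omega))
      (fun s _ _ => lcWeight_sub y (by omega)) (hY _) hfirst hlast,
      fun _ _ h => absurd h (by omega)⟩
end

section
/- Let $\lambda, \mu \ge 0$ and let $\{u_k\}_{k \in \mathbb{Z}}$ be a log-concave sequence of nonnegative reals. Define the operator $\mathcal{L}(u)_k = \lambda u_k + \mu u_{k-1}$. Then the sequence $\{\mathcal{L}(u)_k\}_{k \in \mathbb{Z}}$ is also log-concave, and consequently $\{\mathcal{L}^n(u)_k\}_{k \in \mathbb{Z}}$ is log-concave for every $n \ge 0$. -/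
/-- The operator `ℒ[λ,μ]` on doubly infinite sequences:
`ℒ(u)_k = λ u_k + μ u_{k-1}`. -/
def Lop (lam mu : ℝ) (u : ℤ → ℝ) : ℤ → ℝ := fun k => lam * u k + mu * u (k - 1)

/-! Log-concavity of `u` alone does not pass to `ℒ(u)` (think of `1, 0, 0, 1`); what does is
the inequality `u_{k-2} u_{k+1} ≤ u_{k-1} u_k`, which follows from log-concavity once `u` has no
internal zeros. With it, `ℒ(u)_{k-1} ℒ(u)_{k+1} ≤ ℒ(u)_k ^ 2` is a sum of the three inequalities
for the coefficients `λ²`, `λμ` and `μ²`. Nonnegativity and the absence of internal zeros are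
preserved by `ℒ`, so the argument iterates. -/

def IsLogConcave (u : ℤ → ℝ) : Prop :=
  ∀ k, u (k - 1) * u (k + 1) ≤ u k ^ 2

def NoInternalZeros {M : Type*} [Zero M] (u : ℤ → M) : Prop :=
  ∀ i j k : ℤ, i < j → j < k → u i ≠ 0 → u k ≠ 0 → u j ≠ 0

lemma NoInternalZeros.ne_zero_of_le {M : Type*} [Zero M] {u : ℤ → M} (h : NoInternalZeros u)
    {a b c : ℤ} (hab : a ≤ b) (hbc : b ≤ c) (ha : u a ≠ 0) (hc : u c ≠ 0) : u b ≠ 0 := by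
  rcases hab.eq_or_lt with rfl | hab
  · exact ha
  rcases hbc.eq_or_lt with rfl | hbc
  · exact hc
  exact h a b c hab hbc ha hc

lemma IsLogConcave.mul_le_mul_of_noInternalZeros {u : ℤ → ℝ} (hlc : IsLogConcave u)
    (hnz : NoInternalZeros u) (hnonneg : 0 ≤ u) (k : ℤ) :
    u (k - 2) * u (k + 1) ≤ u (k - 1) * u k := by
  have hinner : 0 ≤ u (k - 1) * u k := mul_nonneg (hnonneg _) (hnonneg _)
  rcases hinner.eq_or_lt with hzero | hpos
  · by_contra! houter
    rw [← hzero] at houter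
    obtain ⟨hleft, hright⟩ := mul_ne_zero_iff.mp houter.ne'
    exact mul_ne_zero (hnz _ _ _ (by omega) (by omega) hleft hright)
      (hnz _ _ _ (by omega) (by omega) hleft hright) hzero.symm
  · have hleft : u (k - 2) * u k ≤ u (k - 1) ^ 2 := by
      simpa [show k - 1 - 1 = k - 2 by ring] using hlc (k - 1)
    refine le_of_mul_le_mul_right ?_ hpos
    calc u (k - 2) * u (k + 1) * (u (k - 1) * u k)
        = (u (k - 2) * u k) * (u (k - 1) * u (k + 1)) := by ring
      _ ≤ u (k - 1) ^ 2 * u k ^ 2 :=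
        mul_le_mul hleft (hlc k) (mul_nonneg (hnonneg _) (hnonneg _)) (sq_nonneg _)
      _ = u (k - 1) * u k * (u (k - 1) * u k) := by ring

section Lop

variable {lam mu : ℝ} {u : ℤ → ℝ}

lemma Lop_nonneg (hlam : 0 ≤ lam) (hmu : 0 ≤ mu) (hnonneg : 0 ≤ u) : 0 ≤ Lop lam mu u :=
  fun _ => add_nonneg (mul_nonneg hlam (hnonneg _)) (mul_nonneg hmu (hnonneg _))

lemma IsLogConcave.Lop (hlam : 0 ≤ lam) (hmu : 0 ≤ mu) (hlc : IsLogConcave u)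
    (hnz : NoInternalZeros u) (hnonneg : 0 ≤ u) : IsLogConcave (Lop lam mu u) := by
  intro k
  have hleft : u (k - 2) * u k ≤ u (k - 1) ^ 2 := by
    simpa [show k - 1 - 1 = k - 2 by ring] using hlc (k - 1)
  have hcross := hlc.mul_le_mul_of_noInternalZeros hnz hnonneg k
  simp only [_root_.Lop, show k - 1 - 1 = k - 2 by ring, add_sub_cancel_right]
  linear_combination (mul_le_mul_of_nonneg_left (hlc k) (mul_nonneg hlam hlam)) +
    mul_le_mul_of_nonneg_left hleft (mul_nonneg hmu hmu) +
    mul_le_mul_of_nonneg_left hcross (mul_nonneg hlam hmu)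

lemma NoInternalZeros.Lop (hlam : 0 ≤ lam) (hmu : 0 ≤ mu) (hnz : NoInternalZeros u)
    (hnonneg : 0 ≤ u) : NoInternalZeros (Lop lam mu u) := by
  intro i j k hij hjk hi hk hj
  obtain ⟨hj₁, hj₂⟩ := (add_eq_zero_iff_of_nonneg (mul_nonneg hlam (hnonneg j))
    (mul_nonneg hmu (hnonneg (j - 1)))).mp hj
  obtain ⟨c, hjc, hc⟩ : ∃ c, j ≤ c ∧ u c ≠ 0 := by
    by_cases hk₀ : u k = 0
    · refine ⟨k - 1, by omega, right_ne_zero_of_mul (a := mu) ?_⟩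
      simpa [_root_.Lop, hk₀] using hk
    · exact ⟨k, hjk.le, hk₀⟩
  by_cases hi₁ : lam * u i = 0
  · have hi₂ : mu * u (i - 1) ≠ 0 := by simpa [_root_.Lop, hi₁] using hi
    obtain ⟨hmu₀, hui⟩ := mul_ne_zero_iff.mp hi₂
    exact hnz.ne_zero_of_le (by omega : i - 1 ≤ j - 1) (by omega) hui hc
      ((mul_eq_zero.mp hj₂).resolve_left hmu₀)
  · obtain ⟨hlam₀, hui⟩ := mul_ne_zero_iff.mp hi₁
    exact hnz.ne_zero_of_le hij.le hjc hui hc ((mul_eq_zero.mp hj₁).resolve_left hlam₀)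

lemma iterate_Lop (hlam : 0 ≤ lam) (hmu : 0 ≤ mu) (hlc : IsLogConcave u)
    (hnz : NoInternalZeros u) (hnonneg : 0 ≤ u) (n : ℕ) :
    IsLogConcave ((Lop lam mu)^[n] u) ∧ NoInternalZeros ((Lop lam mu)^[n] u) ∧
      0 ≤ (Lop lam mu)^[n] u := by
  induction n with
  | zero => exact ⟨hlc, hnz, hnonneg⟩
  | succ n ih =>
    obtain ⟨hlc', hnz', hnonneg'⟩ := ih
    rw [Function.iterate_succ_apply']
    exact ⟨hlc'.Lop hlam hmu hnz' hnonneg', hnz'.Lop hlam hmu hnonneg',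
      Lop_nonneg hlam hmu hnonneg'⟩

end Lop

/-- if `λ, μ ≥ 0` and `u : ℤ → ℝ` is a nonnegative log-concave
sequence (with no internal zeros), then `ℒ(u)` is log-concave, and consequently
`ℒⁿ(u)` is log-concave for every `n ≥ 0`. -/
theorem stmt_12 (lam mu : ℝ) (hlam : 0 ≤ lam) (hmu : 0 ≤ mu)
    (u : ℤ → ℝ)
    (hunonneg : ∀ k, 0 ≤ u k)
    (hulc : ∀ k : ℤ, u (k - 1) * u (k + 1) ≤ u k ^ 2)
    (huniz : ∀ i j k : ℤ, i < j → j < k → u i ≠ 0 → u k ≠ 0 → u j ≠ 0) :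
    (∀ k : ℤ, Lop lam mu u (k - 1) * Lop lam mu u (k + 1) ≤ (Lop lam mu u k) ^ 2) ∧
    (∀ n : ℕ, ∀ k : ℤ,
      ((Lop lam mu)^[n] u) (k - 1) * ((Lop lam mu)^[n] u) (k + 1) ≤
        (((Lop lam mu)^[n] u) k) ^ 2) := by
  have hiter n := (iterate_Lop hlam hmu hulc huniz hunonneg n).1
  exact ⟨hiter 1, hiter⟩
end

section
/- Let $\lambda, \mu \ge 0$, let $\{a_k\}_{k \in \mathbb{Z}}$ be a log-concave sequence of nonnegative reals, and define $a(n,k) = \lambda a_k + \mu a_{k-1}$, $a(n+1,k) = \lambda a(n,k) + \mu a(n,k-1)$ with $a(n-1,k) = a_k$. Then for $0 \le r \le n$, with $\mathscr{A}_r(m;q) = \sum_{k=r}^m a(m,k)q^k$: $\mathscr{A}_r(n;q)^2 - \mathscr{A}_r(n-1;q)\mathscr{A}_r(n+1;q) = \lambda^2\sum_{k=r+1}^n (a_k a_n - a_{k-1}a_{n+1})q^{n+k} + \mu^2\sum_{k=r}^n (a_{r-1}a_{k-1} - a_{r-2}a_k)q^{k+r} + (\lambda^2 a_r + 2\lambda\mu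 a_{r-1} + \mu^2 a_{r-2})a_n q^{n+r}$, and every coefficient on the right-hand side is nonnegative. -/
open Polynomial Finset

/-! Writing `L = λ + μX`, each row's segment polynomial is `L` times the previous one plus two
boundary monomials (at `X^r` and at the top degree). Substituting these recursions into
`𝒜_r(n)² - 𝒜_r(n-1)𝒜_r(n+1)` cancels everything except boundary monomials times `𝒜_r(n)` and
`𝒜_r(n-1)`, which regroup into the stated sums. Their coefficients are nonnegative because a
nonnegative log-concave sequence without internal zeros satisfies
`a_{i-1} a_{j+1} ≤ a_i a_j` for `i ≤ j`. -/

theorem mul_le_mul_of_logConcave {K : Type*} [CommRing K] [LinearOrder K]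
    [IsStrictOrderedRing K] {a : ℤ → K} (hanonneg : ∀ k, 0 ≤ a k)
    (halc : ∀ k : ℤ, a (k - 1) * a (k + 1) ≤ a k ^ 2)
    (haniz : ∀ i j k : ℤ, i < j → j < k → a i ≠ 0 → a k ≠ 0 → a j ≠ 0)
    {i j : ℤ} (hij : i ≤ j) : a (i - 1) * a (j + 1) ≤ a i * a j := by
  induction j, hij using Int.leInduction with
  | base => simpa [sq] using halc i
  | succ j hij ih =>
    by_contra! h
    have hpos : 0 < a (i - 1) * a (j + 1 + 1) :=
      (mul_nonneg (hanonneg _) (hanonneg _)).trans_lt h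
    have hi : a (i - 1) ≠ 0 := left_ne_zero_of_mul hpos.ne'
    have hk : a (j + 1 + 1) ≠ 0 := right_ne_zero_of_mul hpos.ne'
    have hj₀ : 0 < a j := (hanonneg j).lt_of_ne' (haniz _ _ _ (by omega) (by omega) hi hk)
    have hj₁ : 0 < a (j + 1) := (hanonneg _).lt_of_ne' (haniz _ _ _ (by omega) (by omega) hi hk)
    have hlc := halc (j + 1)
    rw [add_sub_cancel_right] at hlc
    have hle := mul_le_mul ih hlc (mul_nonneg (hanonneg _) (hanonneg _))
      (mul_nonneg (hanonneg _) (hanonneg _))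
    have hlt := mul_lt_mul_of_pos_right h (mul_pos hj₀ hj₁)
    linarith

section SegmentPoly

variable {R : Type*} [CommRing R]

def shiftOp (lam mu : R) (f : ℤ → R) (k : ℤ) : R := lam * f k + mu * f (k - 1)

noncomputable def segmentPoly (f : ℤ → R) (r m : ℕ) : R[X] := ∑ k ∈ Ico r m, C (f k) * X ^ k

variable (f g : ℤ → R) (r m : ℕ)

lemma segmentPoly_succ_top (h : r ≤ m) :
    segmentPoly f r (m + 1) = segmentPoly f r m + C (f m) * X ^ m :=
  sum_Ico_succ_top h _

lemma segmentPoly_eq_add_succ_bot (h : r < m) :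
    segmentPoly f r m = C (f r) * X ^ r + segmentPoly f (r + 1) m :=
  sum_eq_sum_Ico_succ_bot h _

lemma segmentPoly_add :
    segmentPoly (fun k => f k + g k) r m = segmentPoly f r m + segmentPoly g r m := by
  simp only [segmentPoly, ← sum_add_distrib, C_add, add_mul]

lemma segmentPoly_sub :
    segmentPoly (fun k => f k - g k) r m = segmentPoly f r m - segmentPoly g r m := by
  simp only [segmentPoly, ← sum_sub_distrib, C_sub, sub_mul]

lemma C_mul_segmentPoly (c : R) :
    C c * segmentPoly f r m = segmentPoly (fun k => c * f k) r m := by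
  simp only [segmentPoly, mul_sum, C_mul, mul_assoc]

lemma X_mul_segmentPoly :
    X * segmentPoly f r m = segmentPoly (fun k => f (k - 1)) (r + 1) (m + 1) := by
  rw [segmentPoly, segmentPoly, ← map_add_right_Ico, sum_map, mul_sum]
  refine sum_congr rfl fun k _ => ?_
  simp only [addRightEmbedding_apply, Nat.cast_add, Nat.cast_one, add_sub_cancel_right, pow_succ]
  ring

lemma X_pow_mul_segmentPoly (j : ℕ) :
    X ^ j * segmentPoly f r m = ∑ k ∈ Ico r m, C (f k) * X ^ (j + k) := by
  simp only [segmentPoly, mul_sum, pow_add]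
  exact sum_congr rfl fun k _ => by ring

lemma segmentPoly_shiftOp (lam mu : R) (h : r ≤ m) :
    segmentPoly (shiftOp lam mu f) r (m + 1) =
      (C lam + C mu * X) * segmentPoly f r m + C (lam * f m) * X ^ m
        + C (mu * f (r - 1)) * X ^ r := by
  have hlam : segmentPoly (fun k => lam * f k) r (m + 1) =
      C lam * segmentPoly f r m + C (lam * f m) * X ^ m := by
    rw [segmentPoly_succ_top _ _ _ h, C_mul_segmentPoly]
  have hmu : segmentPoly (fun k => mu * f (k - 1)) r (m + 1) =
      C mu * (X * segmentPoly f r m) + C (mu * f (r - 1)) * X ^ r := by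
    rw [segmentPoly_eq_add_succ_bot _ _ _ (by omega), X_mul_segmentPoly, C_mul_segmentPoly,
      add_comm]
  unfold shiftOp
  rw [segmentPoly_add, hlam, hmu]
  ring

lemma segmentPoly_shiftOp_top_boundary (lam mu : R) (a : ℤ → R) {n : ℕ} (h : r ≤ n) :
    C (lam * a n) * segmentPoly (shiftOp lam mu a) r (n + 1)
        - C (lam * shiftOp lam mu a (n + 1)) * (X * segmentPoly a r n) =
      C (lam * a n * shiftOp lam mu a r) * X ^ r
        + segmentPoly (fun k => lam ^ 2 * (a k * a n - a (k - 1) * a (n + 1))) (r + 1) (n + 1) := by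
  set b := shiftOp lam mu a with hb
  have hcoeffs :
      segmentPoly (fun k => lam ^ 2 * (a k * a n - a (k - 1) * a (n + 1))) (r + 1) (n + 1) =
        segmentPoly (fun k => lam * a n * b k) (r + 1) (n + 1)
          - segmentPoly (fun k => lam * b (n + 1) * a (k - 1)) (r + 1) (n + 1) := by
    rw [← segmentPoly_sub]
    congr 1
    funext k
    simp only [hb, shiftOp, add_sub_cancel_right]
    ring
  rw [hcoeffs, ← C_mul_segmentPoly, ← C_mul_segmentPoly, ← X_mul_segmentPoly,
    segmentPoly_eq_add_succ_bot b r (n + 1) (by omega)]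
  simp only [C_mul]
  ring

lemma segmentPoly_shiftOp_bot_boundary (lam mu : R) (a : ℤ → R) {n : ℕ} (h : r ≤ n) :
    C (mu * a (r - 1)) * segmentPoly (shiftOp lam mu a) r (n + 1)
        - C (mu * shiftOp lam mu a (r - 1)) * segmentPoly a r n =
      segmentPoly (fun k => mu ^ 2 * (a (r - 1) * a (k - 1) - a (r - 2) * a k)) r (n + 1)
        + C (mu * shiftOp lam mu a (r - 1) * a n) * X ^ n := by
  set b := shiftOp lam mu a with hb
  have hcoeffs :
      segmentPoly (fun k => mu ^ 2 * (a (r - 1) * a (k - 1) - a (r - 2) * a k)) r (n + 1) =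
        segmentPoly (fun k => mu * a (r - 1) * b k) r (n + 1)
          - segmentPoly (fun k => mu * b (r - 1) * a k) r (n + 1) := by
    rw [← segmentPoly_sub]
    congr 1
    funext k
    simp only [hb, shiftOp, show (r : ℤ) - 1 - 1 = r - 2 by ring]
    ring
  rw [hcoeffs, ← C_mul_segmentPoly, ← C_mul_segmentPoly, segmentPoly_succ_top a r n h]
  simp only [C_mul]
  ring

theorem segmentPoly_sq_sub_mul_shiftOp (lam mu : R) (a : ℤ → R) {n : ℕ} (h : r ≤ n) :
    segmentPoly (shiftOp lam mu a) r (n + 1) ^ 2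
        - segmentPoly a r n * segmentPoly (shiftOp lam mu (shiftOp lam mu a)) r (n + 2) =
      X ^ n * segmentPoly (fun k => lam ^ 2 * (a k * a n - a (k - 1) * a (n + 1))) (r + 1) (n + 1)
      + X ^ r * segmentPoly (fun k => mu ^ 2 * (a (r - 1) * a (k - 1) - a (r - 2) * a k)) r (n + 1)
      + C ((lam ^ 2 * a r + 2 * lam * mu * a (r - 1) + mu ^ 2 * a (r - 2)) * a n)
        * X ^ (n + r) := by
  set b := shiftOp lam mu a with hb
  have hCB : segmentPoly (shiftOp lam mu b) r (n + 2) =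
      (C lam + C mu * X) * segmentPoly b r (n + 1)
        + C (lam * b (n + 1)) * X ^ (n + 1) + C (mu * b (r - 1)) * X ^ r := by
    rw [segmentPoly_shiftOp b r (n + 1) lam mu (by omega)]
    push_cast
    rfl
  have hcoeff : (lam ^ 2 * a r + 2 * lam * mu * a (r - 1) + mu ^ 2 * a (r - 2)) * a n =
      lam * a n * b r + mu * b (r - 1) * a n := by
    simp only [hb, shiftOp, show (r : ℤ) - 1 - 1 = r - 2 by ring]
    ring
  rw [hCB, hcoeff, C_add]
  linear_combination segmentPoly b r (n + 1) * segmentPoly_shiftOp a r n lam mu h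
    + X ^ n * segmentPoly_shiftOp_top_boundary r lam mu a h
    + X ^ r * segmentPoly_shiftOp_bot_boundary r lam mu a h

end SegmentPoly

/-- formula (6): for `λ, μ ≥ 0` and a nonnegative log-concave
sequence `a : ℤ → ℝ` (no internal zeros), with rows
`a(n-1,k) = a_k`, `a(n,k) = λ a_k + μ a_{k-1}`,
`a(n+1,k) = λ a(n,k) + μ a(n,k-1)`, and
`𝒜_r(m;q) = ∑_{k=r}^m a(m,k) q^k`, for `0 ≤ r ≤ n` one has
`𝒜_r(n)^2 - 𝒜_r(n-1) 𝒜_r(n+1)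
  = λ² ∑_{k=r+1}^n (a_k a_n - a_{k-1} a_{n+1}) q^{n+k}
  + μ² ∑_{k=r}^n (a_{r-1} a_{k-1} - a_{r-2} a_k) q^{k+r}
  + (λ² a_r + 2λμ a_{r-1} + μ² a_{r-2}) a_n q^{n+r}`,
and every coefficient appearing on the right-hand side is nonnegative. -/
theorem stmt_14 (lam mu : ℝ) (hlam : 0 ≤ lam) (hmu : 0 ≤ mu)
    (a : ℤ → ℝ)
    (hanonneg : ∀ k, 0 ≤ a k)
    (halc : ∀ k : ℤ, a (k - 1) * a (k + 1) ≤ a k ^ 2)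
    (haniz : ∀ i j k : ℤ, i < j → j < k → a i ≠ 0 → a k ≠ 0 → a j ≠ 0)
    (r n : ℕ) (hrn : r ≤ n)
    (Aprev Acur Anext : ℝ[X])
    (hAprev : Aprev = ∑ k ∈ Ico r n, Polynomial.C (a (k : ℤ)) * X ^ k)
    (hAcur : Acur = ∑ k ∈ Icc r n,
      Polynomial.C (lam * a (k : ℤ) + mu * a ((k : ℤ) - 1)) * X ^ k)
    (hAnext : Anext = ∑ k ∈ Icc r (n + 1),
      Polynomial.C (lam * (lam * a (k : ℤ) + mu * a ((k : ℤ) - 1)) +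
        mu * (lam * a ((k : ℤ) - 1) + mu * a ((k : ℤ) - 2))) * X ^ k) :
    Acur ^ 2 - Aprev * Anext =
      (∑ k ∈ Icc (r + 1) n,
        Polynomial.C (lam ^ 2 * (a (k : ℤ) * a (n : ℤ) - a ((k : ℤ) - 1) * a ((n : ℤ) + 1))) *
          X ^ (n + k)) +
      (∑ k ∈ Icc r n,
        Polynomial.C (mu ^ 2 * (a ((r : ℤ) - 1) * a ((k : ℤ) - 1) -
          a ((r : ℤ) - 2) * a (k : ℤ))) * X ^ (k + r)) +
      Polynomial.C ((lam ^ 2 * a (r : ℤ) + 2 * lam * mu * a ((r : ℤ) - 1) +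
        mu ^ 2 * a ((r : ℤ) - 2)) * a (n : ℤ)) * X ^ (n + r) ∧
    (∀ k ∈ Icc (r + 1) n, 0 ≤ a (k : ℤ) * a (n : ℤ) - a ((k : ℤ) - 1) * a ((n : ℤ) + 1)) ∧
    (∀ k ∈ Icc r n, 0 ≤ a ((r : ℤ) - 1) * a ((k : ℤ) - 1) - a ((r : ℤ) - 2) * a (k : ℤ)) ∧
    0 ≤ (lam ^ 2 * a (r : ℤ) + 2 * lam * mu * a ((r : ℤ) - 1) +
      mu ^ 2 * a ((r : ℤ) - 2)) * a (n : ℤ) := by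
  have hAprev' : Aprev = segmentPoly a r n := hAprev
  have hAcur' : Acur = segmentPoly (shiftOp lam mu a) r (n + 1) := by
    rw [hAcur, segmentPoly, Ico_add_one_right_eq_Icc]
    rfl
  have hAnext' : Anext = segmentPoly (shiftOp lam mu (shiftOp lam mu a)) r (n + 2) := by
    rw [hAnext, ← Ico_add_one_right_eq_Icc]
    refine sum_congr rfl fun k _ => ?_
    simp only [shiftOp, sub_sub]
    norm_num
  refine ⟨?_, fun k hk => ?_, fun k hk => ?_, ?_⟩
  · rw [hAprev', hAcur', hAnext', segmentPoly_sq_sub_mul_shiftOp r lam mu a hrn,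
      X_pow_mul_segmentPoly, X_pow_mul_segmentPoly, Ico_add_one_right_eq_Icc,
      Ico_add_one_right_eq_Icc]
    simp only [add_comm r]
  · have := mul_le_mul_of_logConcave hanonneg halc haniz (i := k) (j := n)
      (by simp only [mem_Icc] at hk; omega)
    linarith
  · have := mul_le_mul_of_logConcave hanonneg halc haniz (i := r - 1) (j := k - 1)
      (by simp only [mem_Icc] at hk; omega)
    rw [show (r : ℤ) - 1 - 1 = r - 2 by ring, sub_add_cancel] at this
    linarith
  · have := hanonneg r
    have := hanonneg (r - 1)
    have := hanonneg (r - 2)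
    have := hanonneg n
    positivity
end

section
/- If the sequences $\{x_n\}_{n\ge 0}$ and $\{y_n\}_{n\ge 0}$ of nonnegative reals are log-concave (with no internal zeros), then so is their ordinary convolution $z_n = \sum_{k=0}^n x_k y_{n-k}$. -/
/-!
Extend `x` and `y` by zero to `ℤ`. Log-concavity without internal zeros upgrades to
`x p * x (q + 1) ≤ x (p + 1) * x q` for all `p < q`, i.e. every 2 × 2 minor of two adjacent
rows (or columns) of the Toeplitz matrix `(x (i - j))` is nonnegative. The convolution `z` has
Toeplitz matrix the product of those of `x` and `y`, and `z (n + 1) ^ 2 - z n * z (n + 2)` is the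
minor of this product in rows `n + 1, n + 2` and columns `0, 1`. By the Cauchy–Binet formula it is
a sum of products of two nonnegative minors.
-/

open Finset

section CauchyBinet

variable {ι R : Type*} [CommRing R]

theorem two_mul_sum_mul_sum_sub_sum_mul_sum (s : Finset ι) (a a' b b' : ι → R) :
    2 * ((∑ k ∈ s, a k * b k) * (∑ k ∈ s, a' k * b' k)
      - (∑ k ∈ s, a k * b' k) * (∑ k ∈ s, a' k * b k)) =
    ∑ k ∈ s, ∑ l ∈ s, (a k * a' l - a l * a' k) * (b k * b' l - b l * b' k) := by
  set D : ι → ι → R := fun k l => a k * b k * (a' l * b' l) - a k * b' k * (a' l * b l)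
  have hdet : (∑ k ∈ s, a k * b k) * (∑ k ∈ s, a' k * b' k)
      - (∑ k ∈ s, a k * b' k) * (∑ k ∈ s, a' k * b k) = ∑ k ∈ s, ∑ l ∈ s, D k l := by
    simp only [D, sum_mul_sum, ← sum_sub_distrib]
  calc _ = ∑ k ∈ s, ∑ l ∈ s, D k l + ∑ k ∈ s, ∑ l ∈ s, D l k := by
        rw [hdet, sum_comm (f := fun k l => D l k)]; ring
    _ = _ := by
        simp only [← sum_add_distrib]
        exact sum_congr rfl fun k _ => sum_congr rfl fun l _ => by simp only [D]; ring

variable [LinearOrder ι] [LinearOrder R] [IsStrictOrderedRing R]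

theorem sum_mul_sum_le_sum_mul_sum_of_minors_nonneg (s : Finset ι) {a a' b b' : ι → R}
    (ha : ∀ k l, k < l → a l * a' k ≤ a k * a' l) (hb : ∀ k l, k < l → b l * b' k ≤ b k * b' l) :
    (∑ k ∈ s, a k * b' k) * (∑ k ∈ s, a' k * b k) ≤
      (∑ k ∈ s, a k * b k) * (∑ k ∈ s, a' k * b' k) := by
  have h : 0 ≤ ∑ k ∈ s, ∑ l ∈ s, (a k * a' l - a l * a' k) * (b k * b' l - b l * b' k) := by
    refine sum_nonneg fun k _ => sum_nonneg fun l _ => ?_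
    rcases lt_trichotomy k l with hkl | rfl | hlk
    · exact mul_nonneg (sub_nonneg.2 (ha k l hkl)) (sub_nonneg.2 (hb k l hkl))
    · simp
    · exact mul_nonneg_of_nonpos_of_nonpos (sub_nonpos.2 (ha l k hlk)) (sub_nonpos.2 (hb l k hlk))
  rw [← two_mul_sum_mul_sum_sub_sum_mul_sum] at h
  linarith

end CauchyBinet

def zeroExtend {M : Type*} [Zero M] (x : ℕ → M) (i : ℤ) : M := if 0 ≤ i then x i.toNat else 0

section ZeroExtend

variable {M : Type*} [Zero M] (x : ℕ → M)

@[simp]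
theorem zeroExtend_natCast (k : ℕ) : zeroExtend x k = x k := by
  simp [zeroExtend]

theorem zeroExtend_of_neg {i : ℤ} (hi : i < 0) : zeroExtend x i = 0 := by
  simp [zeroExtend, not_le.2 hi]

theorem zeroExtend_nonneg [Preorder M] {x : ℕ → M} (hx : ∀ k, 0 ≤ x k) (i : ℤ) :
    0 ≤ zeroExtend x i := by
  unfold zeroExtend
  split_ifs
  exacts [hx _, le_rfl]

end ZeroExtend

theorem sum_range_mul_eq_sum_Icc_zeroExtend {R : Type*} [CommSemiring R] (x y : ℕ → R) (m : ℕ)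
    {c N : ℤ} (hc : 0 ≤ c) (hN : m + c ≤ N) :
    ∑ k ∈ range (m + 1), x k * y (m - k) =
      ∑ i ∈ Icc 0 N, zeroExtend x ((m : ℤ) + c - i) * zeroExtend y (i - c) := by
  have hterm : ∀ k ≤ m, x k * y (m - k) =
      zeroExtend x ((m : ℤ) + c - ((m : ℤ) + c - k)) * zeroExtend y ((m : ℤ) + c - k - c) := by
    intro k hk
    rw [show (m : ℤ) + c - ((m : ℤ) + c - k) = k by ring,
      show (m : ℤ) + c - k - c = ((m - k : ℕ) : ℤ) by omega, zeroExtend_natCast, zeroExtend_natCast]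
  refine sum_bij_ne_zero (fun k _ _ => (m : ℤ) + c - k)
    (fun k hk _ => mem_Icc.2 (by rw [mem_range] at hk; omega))
    (fun _ _ _ _ _ _ h => by simpa using h) ?_
    (fun k hk _ => hterm k (Nat.lt_succ_iff.1 (mem_range.1 hk)))
  intro i _ hi
  have h1 : 0 ≤ (m : ℤ) + c - i := by
    by_contra h; exact hi (by rw [zeroExtend_of_neg x (by omega), zero_mul])
  have h2 : 0 ≤ i - c := by
    by_contra h; exact hi (by rw [zeroExtend_of_neg y (by omega), mul_zero])
  refine ⟨((m : ℤ) + c - i).toNat, mem_range.2 (by omega), ?_, by omega⟩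
  rwa [hterm _ (by omega), show (m : ℤ) + c - (((m : ℤ) + c - i).toNat : ℕ) = i by omega]

section LogConcave

variable {R : Type*} [CommRing R] [LinearOrder R] [IsStrictOrderedRing R] {x : ℕ → R}
  (hx : ∀ k, 0 ≤ x k) (hlc : ∀ k, x k * x (k + 2) ≤ x (k + 1) ^ 2)
  (hniz : ∀ i j k : ℕ, i < j → j < k → x i ≠ 0 → x k ≠ 0 → x j ≠ 0)
include hx hlc hniz

theorem mul_succ_le_succ_mul_of_logConcave_s15 {p q : ℕ} (hpq : p < q) :
    x p * x (q + 1) ≤ x (p + 1) * x q := by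
  induction q, hpq using Nat.le_induction with
  | base => simpa [sq] using hlc p
  | succ q hpq ih =>
    rcases (hx (q + 1)).eq_or_lt with hq | hq
    · have hzero : x p * x (q + 2) = 0 := by
        by_contra hne
        exact hniz p (q + 1) (q + 2) (by omega) (by omega) (left_ne_zero_of_mul hne)
          (right_ne_zero_of_mul hne) hq.symm
      rw [hzero, ← hq, mul_zero]
    · refine le_of_mul_le_mul_right ?_ hq
      calc x p * x (q + 2) * x (q + 1) = x p * x (q + 1) * x (q + 2) := by ring
        _ ≤ x (p + 1) * x q * x (q + 2) := mul_le_mul_of_nonneg_right ih (hx _)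
        _ = x (p + 1) * (x q * x (q + 2)) := by ring
        _ ≤ x (p + 1) * x (q + 1) ^ 2 := mul_le_mul_of_nonneg_left (hlc q) (hx _)
        _ = x (p + 1) * x (q + 1) * x (q + 1) := by ring

theorem zeroExtend_mul_succ_le_succ_mul {i j : ℤ} (hij : i < j) :
    zeroExtend x i * zeroExtend x (j + 1) ≤ zeroExtend x (i + 1) * zeroExtend x j := by
  rcases lt_or_ge i 0 with hi | hi
  · rw [zeroExtend_of_neg x hi, zero_mul]
    exact mul_nonneg (zeroExtend_nonneg hx _) (zeroExtend_nonneg hx _)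
  · lift i to ℕ using hi
    lift j to ℕ using by omega
    exact_mod_cast mul_succ_le_succ_mul_of_logConcave_s15 hx hlc hniz (by exact_mod_cast hij)

end LogConcave

/-- Corollary 3.3: the ordinary convolution of two nonnegative
log-concave sequences (with no internal zeros) is log-concave. -/
theorem stmt_15 (x y : ℕ → ℝ)
    (hxnonneg : ∀ k, 0 ≤ x k) (hynonneg : ∀ k, 0 ≤ y k)
    (hxlc : ∀ k : ℕ, x k * x (k + 2) ≤ x (k + 1) ^ 2)
    (hylc : ∀ k : ℕ, y k * y (k + 2) ≤ y (k + 1) ^ 2)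
    (hxniz : ∀ i j k : ℕ, i < j → j < k → x i ≠ 0 → x k ≠ 0 → x j ≠ 0)
    (hyniz : ∀ i j k : ℕ, i < j → j < k → y i ≠ 0 → y k ≠ 0 → y j ≠ 0)
    (z : ℕ → ℝ)
    (hz : ∀ n : ℕ, z n = ∑ k ∈ Finset.range (n + 1), x k * y (n - k)) :
    ∀ n : ℕ, z n * z (n + 2) ≤ z (n + 1) ^ 2 := by
  intro n
  set X := zeroExtend x
  set Y := zeroExtend y
  have hX : ∀ k l : ℤ, k < l → X (n + 1 - l) * X (n + 2 - k) ≤ X (n + 1 - k) * X (n + 2 - l) :=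
    fun k l hkl => by
      have := zeroExtend_mul_succ_le_succ_mul hxnonneg hxlc hxniz (i := n + 1 - l) (j := n + 1 - k)
        (by omega)
      rw [show (n : ℤ) + 1 - k + 1 = n + 2 - k by ring,
        show (n : ℤ) + 1 - l + 1 = n + 2 - l by ring] at this
      linarith
  have hY : ∀ k l : ℤ, k < l → Y l * Y (k - 1) ≤ Y k * Y (l - 1) := fun k l hkl => by
    have := zeroExtend_mul_succ_le_succ_mul hynonneg hylc hyniz (i := k - 1) (j := l - 1) (by omega)
    simp only [sub_add_cancel] at this
    linarith
  have h0 : z n = ∑ i ∈ Icc (0 : ℤ) (n + 2), X (n + 1 - i) * Y (i - 1) := by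
    rw [hz]; exact sum_range_mul_eq_sum_Icc_zeroExtend x y n zero_le_one (by omega)
  have h1 : z (n + 1) = ∑ i ∈ Icc (0 : ℤ) (n + 2), X (n + 1 - i) * Y i := by
    simpa [hz] using sum_range_mul_eq_sum_Icc_zeroExtend x y (n + 1) le_rfl (N := n + 2) (by omega)
  have h1' : z (n + 1) = ∑ i ∈ Icc (0 : ℤ) (n + 2), X (n + 2 - i) * Y (i - 1) := by
    rw [hz]
    convert sum_range_mul_eq_sum_Icc_zeroExtend x y (n + 1) zero_le_one (N := n + 2) (by omega)
      using 5
    push_cast; ring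
  have h2 : z (n + 2) = ∑ i ∈ Icc (0 : ℤ) (n + 2), X (n + 2 - i) * Y i := by
    simpa [hz] using sum_range_mul_eq_sum_Icc_zeroExtend x y (n + 2) le_rfl (N := n + 2) (by omega)
  rw [h0, h2, sq]
  nth_rewrite 1 [h1]
  rw [h1']
  exact sum_mul_sum_le_sum_mul_sum_of_minors_nonneg _ hX hY
end

section
/- Let $a \ge b \ge 0$ be integers. If the sequences $\{x_n\}$ and $\{y_n\}$ of nonnegative reals are log-concave (with no internal zeros), then so is the sequence $z_n = \sum_{k=0}^n \binom{a+n}{b+k} x_k y_{n-k}$. -/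
/-!
Group the terms of `z (n+1) ^ 2` and of `z n * z (n+2)` by the sum `s = i + j` of the two
`x`-indices. For fixed `s` the weights `X i = x i * x (s - i)` and `Y i = y (n+1-i) * y (n+1-s+i)`
are symmetric about `s / 2` and, by log-concavity without internal zeros, nondecreasing up to
`s / 2`; so each is a nonnegative combination of indicators of intervals `[t, s - t]` (a layer-cake
decomposition). For one pair of indicators the claim is a comparison of interval sums of
`C(m, b+i) C(m+2, b+s-i)` and `C(m+1, b+i) C(m+1, b+s-i)`, `m = a + n`. Pascal's rule makes their
difference telescope, and the boundary terms are controlled by the monotonicity of the ratios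
`C(m+1, k) / C(m, k)` and `C(m+1, k+1) / C(m, k)` in `k`.
-/

open Finset

namespace BinomialLogConcave

theorem choose_mul_succ_choose_le {m i j : ℕ} (hij : i ≤ j) :
    m.choose j * (m + 1).choose i ≤ m.choose i * (m + 1).choose j := by
  rcases lt_or_ge m j with hj | hj
  · simp [Nat.choose_eq_zero_of_lt hj]
  refine Nat.le_of_mul_le_mul_right ?_
    (Nat.mul_pos (by omega : 0 < m + 1 - i) (by omega : 0 < m + 1 - j))
  calc m.choose j * (m + 1).choose i * ((m + 1 - i) * (m + 1 - j))
      = m.choose i * (m + 1) * (m.choose j * (m + 1 - j)) := by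
        rw [Nat.choose_mul_succ_eq m i]; ring
    _ ≤ m.choose i * (m + 1) * (m.choose j * (m + 1 - i)) := by gcongr
    _ = m.choose i * (m.choose j * (m + 1)) * (m + 1 - i) := by ring
    _ = m.choose i * (m + 1).choose j * ((m + 1 - i) * (m + 1 - j)) := by
        rw [Nat.choose_mul_succ_eq m j]; ring

theorem choose_mul_succ_choose_succ_le {m i j : ℕ} (hij : i ≤ j) :
    m.choose i * (m + 1).choose (j + 1) ≤ m.choose j * (m + 1).choose (i + 1) := by
  refine Nat.le_of_mul_le_mul_left ?_ (Nat.succ_pos m)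
  calc (m + 1) * (m.choose i * (m + 1).choose (j + 1))
      = (m + 1).choose (i + 1) * (i + 1) * (m + 1).choose (j + 1) := by
        rw [← Nat.add_one_mul_choose_eq]; ring
    _ ≤ (m + 1).choose (i + 1) * (j + 1) * (m + 1).choose (j + 1) := by gcongr
    _ = (m + 1) * (m.choose j * (m + 1).choose (i + 1)) := by
        rw [mul_assoc, mul_comm (j + 1), ← Nat.add_one_mul_choose_eq]; ring

noncomputable def chooseZ (m : ℕ) (r : ℤ) : ℝ :=
  if 0 ≤ r then (m.choose r.toNat : ℝ) else 0

theorem chooseZ_nonneg (m : ℕ) (r : ℤ) : 0 ≤ chooseZ m r := by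
  unfold chooseZ; split <;> positivity

theorem chooseZ_of_neg (m : ℕ) {r : ℤ} (hr : r < 0) : chooseZ m r = 0 :=
  if_neg hr.not_ge

@[simp]
theorem chooseZ_natCast (m k : ℕ) : chooseZ m k = m.choose k := by
  simp [chooseZ]

theorem chooseZ_succ (m : ℕ) (r : ℤ) :
    chooseZ (m + 1) r = chooseZ m r + chooseZ m (r - 1) := by
  rcases lt_trichotomy r 0 with hr | rfl | hr
  · simp [chooseZ_of_neg _ hr, chooseZ_of_neg _ (show r - 1 < 0 by omega)]
  · simp [chooseZ]
  · obtain ⟨k, rfl⟩ : ∃ k : ℕ, r = k + 1 := ⟨(r - 1).toNat, by omega⟩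
    rw [add_sub_cancel_right, ← Nat.cast_succ]
    simp only [chooseZ_natCast]
    exact_mod_cast (Nat.choose_succ_succ' m k).trans (add_comm _ _)

theorem chooseZ_mul_succ_le (m : ℕ) {i j : ℤ} (hij : i ≤ j) :
    chooseZ m j * chooseZ (m + 1) i ≤ chooseZ m i * chooseZ (m + 1) j := by
  rcases lt_or_ge i 0 with hi | hi
  · rw [chooseZ_of_neg _ hi, mul_zero]
    exact mul_nonneg (chooseZ_nonneg _ _) (chooseZ_nonneg _ _)
  lift i to ℕ using hi
  lift j to ℕ using (by omega)
  simp only [chooseZ_natCast]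
  exact_mod_cast choose_mul_succ_choose_le (by omega)

theorem chooseZ_mul_succ_succ_le (m : ℕ) {i j : ℤ} (hij : i ≤ j) :
    chooseZ m i * chooseZ (m + 1) (j + 1) ≤ chooseZ m j * chooseZ (m + 1) (i + 1) := by
  rcases lt_or_ge i 0 with hi | hi
  · rw [chooseZ_of_neg _ hi, zero_mul]
    exact mul_nonneg (chooseZ_nonneg _ _) (chooseZ_nonneg _ _)
  lift i to ℕ using hi
  lift j to ℕ using (by omega)
  rw [← Nat.cast_succ, ← Nat.cast_succ]
  simp only [chooseZ_natCast]
  exact_mod_cast choose_mul_succ_choose_succ_le (m := m) (by omega : i ≤ j)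

theorem sum_Icc_sub_sub_one {M : Type*} [AddCommGroup M] (h : ℤ → M) {u v : ℤ}
    (huv : u - 1 ≤ v) :
    ∑ i ∈ Icc u v, (h i - h (i - 1)) = h v - h (u - 1) := by
  induction v, huv using Int.leInduction with
  | base => simp
  | succ v huv ih =>
    rw [← insert_Icc_right_eq_Icc_add_one (by omega), sum_insert (by simp), ih,
      add_sub_cancel_right]
    abel

theorem sum_Icc_sub_one_add {M : Type*} [AddCommMonoid M] (h : ℤ → M) {u v : ℤ}
    (huv : u - 1 ≤ v) :
    ∑ i ∈ Icc (u - 1) (v - 1), h i + h v = h (u - 1) + ∑ i ∈ Icc u v, h i := by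
  have : insert v (Icc (u - 1) (v - 1)) = insert (u - 1) (Icc u v) := by
    ext i; simp only [mem_insert, mem_Icc]; omega
  rw [add_comm, ← sum_insert (s := Icc (u - 1) (v - 1)) (by simp), this, sum_insert (by simp)]

theorem sum_inter_Icc_chooseZ_mul_le (m : ℕ) (c : ℤ) {s t p : ℤ} (ht : 2 * t ≤ s)
    (hp : 2 * p ≤ s) :
    ∑ i ∈ Icc t (s - t) ∩ Icc (p - 1) (s - p - 1),
        chooseZ m (c + i) * chooseZ (m + 2) (c + (s - i))
      ≤ ∑ i ∈ Icc t (s - t) ∩ Icc p (s - p),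
        chooseZ (m + 1) (c + i) * chooseZ (m + 1) (c + (s - i)) := by
  set g : ℤ → ℝ := fun i => chooseZ m (c + i) * chooseZ (m + 2) (c + (s - i))
  set f : ℤ → ℝ := fun i => chooseZ (m + 1) (c + i) * chooseZ (m + 1) (c + (s - i))
  set A : ℤ → ℝ := fun i => chooseZ m (c + i) * chooseZ (m + 1) (c + (s - i) - 1)
  set D : ℤ → ℝ := fun i => chooseZ m (c + i) * chooseZ (m + 1) (c + (s - i))
  have hg : ∀ i, g i = A i + D i := fun i => by
    simp only [g, A, D, chooseZ_succ (m + 1)]; ring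
  have hf : ∀ i, f i = g i - (A i - A (i - 1)) := fun i => by
    simp only [f, g, A, chooseZ_succ m (c + i), chooseZ_succ (m + 1) (c + (s - i))]
    ring_nf
  have hsum (u v : ℤ) (huv : u - 1 ≤ v) :
      ∑ i ∈ Icc u v, f i = ∑ i ∈ Icc u v, g i - (A v - A (u - 1)) := by
    simp only [hf, sum_sub_distrib, sum_Icc_sub_sub_one A huv]
  rcases le_or_gt p t with hpt | htp
  · have hA : A (s - t) ≤ A (t - 1) := by
      convert chooseZ_mul_succ_le m (show c + (t - 1) ≤ c + (s - t) by omega) using 3 <;> ring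
    rw [show Icc t (s - t) ∩ Icc p (s - p) = Icc t (s - t) by
        ext; simp only [mem_inter, mem_Icc]; omega,
      hsum _ _ (by omega)]
    have := sum_le_sum_of_subset_of_nonneg (f := g)
      (inter_subset_left (s₁ := Icc t (s - t)) (s₂ := Icc (p - 1) (s - p - 1)))
      fun i _ _ => mul_nonneg (chooseZ_nonneg _ _) (chooseZ_nonneg _ _)
    linarith
  · have hD : D (p - 1) ≤ D (s - p) := by
      convert chooseZ_mul_succ_succ_le m (show c + (p - 1) ≤ c + (s - p) by omega) using 3 <;>
        ring
    rw [show Icc t (s - t) ∩ Icc p (s - p) = Icc p (s - p) by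
        ext; simp only [mem_inter, mem_Icc]; omega,
      show Icc t (s - t) ∩ Icc (p - 1) (s - p - 1) = Icc (p - 1) (s - p - 1) by
        ext; simp only [mem_inter, mem_Icc]; omega,
      hsum _ _ (by omega)]
    linarith [sum_Icc_sub_one_add g (show p - 1 ≤ s - p by omega), hg (p - 1), hg (s - p)]

structure IsSymmUnimodal (X : ℤ → ℝ) (s L : ℤ) : Prop where
  symm : ∀ i, X (s - i) = X i
  mono : ∀ t, 2 * t ≤ s → X (t - 1) ≤ X t
  eq_zero_of_lt : ∀ i < L, X i = 0

theorem IsSymmUnimodal.eq_sum_indicator {X : ℤ → ℝ} {s L : ℤ} (hX : IsSymmUnimodal X s L)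
    (i : ℤ) :
    X i = ∑ t ∈ Icc L (s / 2), (X t - X (t - 1)) * if i ∈ Icc t (s - t) then 1 else 0 := by
  simp only [mul_ite, mul_one, mul_zero, ← sum_filter]
  rw [show (Icc L (s / 2)).filter (fun t => i ∈ Icc t (s - t)) = Icc L (min i (s - i)) by
      ext t; simp only [mem_filter, mem_Icc]; omega]
  rcases lt_or_ge (min i (s - i)) L with h | h
  · rw [Icc_eq_empty_of_lt h, sum_empty]
    rcases min_lt_iff.mp h with h | h
    · exact hX.eq_zero_of_lt i h
    · rw [← hX.symm]; exact hX.eq_zero_of_lt _ h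
  · rw [sum_Icc_sub_sub_one X (by omega), hX.eq_zero_of_lt (L - 1) (by omega), sub_zero]
    rcases min_choice i (s - i) with h | h <;> rw [h]
    exact (hX.symm i).symm

theorem sum_mul_mul_eq_of_eq_sum_indicator {ι κ ν R : Type*} [DecidableEq ι] [CommSemiring R]
    {I : Finset ι} {T : Finset κ} {P : Finset ν} {g X Y : ι → R} {a : κ → R} {b : ν → R}
    {A : κ → Finset ι} {B : ν → Finset ι}
    (hX : ∀ i, X i = ∑ t ∈ T, a t * if i ∈ A t then 1 else 0)
    (hY : ∀ i, Y i = ∑ p ∈ P, b p * if i ∈ B p then 1 else 0) :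
    ∑ i ∈ I, g i * (X i * Y i) =
      ∑ t ∈ T, ∑ p ∈ P, a t * b p * ∑ i ∈ I ∩ (A t ∩ B p), g i := by
  have h (i t p) :
      g i * ((a t * if i ∈ A t then 1 else 0) * (b p * if i ∈ B p then 1 else 0)) =
        a t * b p * if i ∈ A t ∩ B p then g i else 0 := by
    simp only [mem_inter]
    split_ifs <;> simp_all [mul_comm]
  calc ∑ i ∈ I, g i * (X i * Y i)
      = ∑ i ∈ I, ∑ t ∈ T, ∑ p ∈ P, a t * b p * if i ∈ A t ∩ B p then g i else 0 := by
        refine sum_congr rfl fun i _ => ?_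
        rw [hX i, hY i, sum_mul_sum, mul_sum]
        simp only [mul_sum, h]
    _ = ∑ t ∈ T, ∑ p ∈ P, ∑ i ∈ I,
          a t * b p * if i ∈ A t ∩ B p then g i else 0 := by
        rw [sum_comm]; exact sum_congr rfl fun t _ => sum_comm
    _ = _ := by simp only [← mul_sum, sum_ite_mem]

theorem sum_chooseZ_mul_le_of_isSymmUnimodal (m : ℕ) (c : ℤ) {s LX LY : ℤ} {X Y : ℤ → ℝ}
    {I : Finset ℤ} (hX : IsSymmUnimodal X s LX) (hY : IsSymmUnimodal Y s LY)
    (hI : ∀ i, LX ≤ i → i ≤ s - LX → LY ≤ i + 1 → i ≤ s - LY → i ∈ I) :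
    ∑ i ∈ I, chooseZ m (c + i) * chooseZ (m + 2) (c + (s - i)) * (X i * Y (i + 1))
      ≤ ∑ i ∈ I, chooseZ (m + 1) (c + i) * chooseZ (m + 1) (c + (s - i)) * (X i * Y i) := by
  have hY' (i : ℤ) : Y (i + 1) = ∑ p ∈ Icc LY (s / 2),
      (Y p - Y (p - 1)) * if i ∈ Icc (p - 1) (s - p - 1) then 1 else 0 := by
    rw [hY.eq_sum_indicator]
    refine sum_congr rfl fun p _ => ?_
    simp only [mem_Icc]
    congr 2
    exact propext (by omega)
  rw [sum_mul_mul_eq_of_eq_sum_indicator hX.eq_sum_indicator hY',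
    sum_mul_mul_eq_of_eq_sum_indicator hX.eq_sum_indicator hY.eq_sum_indicator]
  refine sum_le_sum fun t ht => sum_le_sum fun p hp => ?_
  rw [mem_Icc] at ht hp
  have hts : 2 * t ≤ s := by omega
  have hps : 2 * p ≤ s := by omega
  refine mul_le_mul_of_nonneg_left ?_ (mul_nonneg (sub_nonneg.mpr (hX.mono t hts))
    (sub_nonneg.mpr (hY.mono p hps)))
  have hL : Icc t (s - t) ∩ Icc (p - 1) (s - p - 1) ⊆ I := fun i hi => by
    simp only [mem_inter, mem_Icc] at hi
    exact hI i (by omega) (by omega) (by omega) (by omega)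
  have hR : Icc t (s - t) ∩ Icc p (s - p) ⊆ I := fun i hi => by
    simp only [mem_inter, mem_Icc] at hi
    exact hI i (by omega) (by omega) (by omega) (by omega)
  rw [inter_eq_right.mpr hL, inter_eq_right.mpr hR]
  exact sum_inter_Icc_chooseZ_mul_le m c hts hps

/-- Pólya frequency sequences of order two. -/
structure IsPF2 (u : ℤ → ℝ) : Prop where
  nonneg : ∀ k, 0 ≤ u k
  mul_le_sq : ∀ k, u k * u (k + 2) ≤ u (k + 1) ^ 2
  ne_zero_of_lt_of_lt : ∀ i j k, i < j → j < k → u i ≠ 0 → u k ≠ 0 → u j ≠ 0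

theorem IsPF2.mul_le_mul_of_le {u : ℤ → ℝ} (hu : IsPF2 u) {i j : ℤ} (hij : i ≤ j) :
    u (i - 1) * u (j + 1) ≤ u i * u j := by
  induction j, hij using Int.leInduction with
  | base =>
    simpa [sq, sub_add_cancel, show i - 1 + 2 = i + 1 by ring] using hu.mul_le_sq (i - 1)
  | succ j hij ih =>
    rw [show j + 1 + 1 = j + 2 by ring]
    by_cases h : u (i - 1) = 0 ∨ u (j + 2) = 0
    · rcases h with h | h <;> rw [h] <;> simp only [zero_mul, mul_zero] <;>
        exact mul_nonneg (hu.nonneg _) (hu.nonneg _)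
    obtain ⟨h₁, h₂⟩ := not_or.mp h
    have hj : 0 < u j := (hu.nonneg j).lt_of_ne'
      (hu.ne_zero_of_lt_of_lt _ _ _ (by omega) (by omega) h₁ h₂)
    refine le_of_mul_le_mul_left ?_ hj
    calc u j * (u (i - 1) * u (j + 2)) = u (i - 1) * (u j * u (j + 2)) := by ring
      _ ≤ u (i - 1) * u (j + 1) ^ 2 := by gcongr; exacts [hu.nonneg _, hu.mul_le_sq j]
      _ = u (i - 1) * u (j + 1) * u (j + 1) := by ring
      _ ≤ u i * u j * u (j + 1) := by gcongr; exact hu.nonneg _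
      _ = u j * (u i * u (j + 1)) := by ring

theorem IsPF2.isSymmUnimodal {u : ℤ → ℝ} (hu : IsPF2 u) (hu0 : ∀ k < 0, u k = 0)
    (d s : ℤ) :
    IsSymmUnimodal (fun i => u (d + i) * u (d + (s - i))) s (-d) where
  symm i := by simp only [sub_sub_cancel]; ring
  mono t ht := by
    convert hu.mul_le_mul_of_le (show d + t ≤ d + (s - t) by omega) using 3 <;> ring
  eq_zero_of_lt i hi := by simp only [hu0 _ (by omega : d + i < 0), zero_mul]

def zeroExt (x : ℕ → ℝ) (k : ℤ) : ℝ := if 0 ≤ k then x k.toNat else 0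

@[simp]
theorem zeroExt_natCast (x : ℕ → ℝ) (k : ℕ) : zeroExt x k = x k := by
  simp [zeroExt]

theorem zeroExt_of_neg (x : ℕ → ℝ) {k : ℤ} (hk : k < 0) : zeroExt x k = 0 :=
  if_neg hk.not_ge

theorem isPF2_zeroExt {x : ℕ → ℝ} (hx : ∀ k, 0 ≤ x k)
    (hlc : ∀ k, x k * x (k + 2) ≤ x (k + 1) ^ 2)
    (hniz : ∀ i j k, i < j → j < k → x i ≠ 0 → x k ≠ 0 → x j ≠ 0) :
    IsPF2 (zeroExt x) where
  nonneg k := by unfold zeroExt; split <;> simp [hx]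
  mul_le_sq k := by
    rcases lt_or_ge k 0 with hk | hk
    · rw [zeroExt_of_neg x hk, zero_mul]; positivity
    lift k to ℕ using hk
    exact_mod_cast hlc k
  ne_zero_of_lt_of_lt i j k hij hjk hi hk := by
    have : 0 ≤ i := by by_contra h; exact hi (zeroExt_of_neg x (by omega))
    lift i to ℕ using this
    lift j to ℕ using (by omega)
    lift k to ℕ using (by omega)
    simp only [zeroExt_natCast] at hi hk ⊢
    exact hniz i j k (by omega) (by omega) hi hk

theorem sum_mul_sum_eq_sum_sum_sub {R : Type*} [NonUnitalNonAssocSemiring R] {I J S : Finset ℤ}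
    {F G : ℤ → R} (hS : ∀ i ∈ I, ∀ j ∈ J, i + j ∈ S) (hG : ∀ j ∉ J, G j = 0) :
    (∑ i ∈ I, F i) * ∑ j ∈ J, G j = ∑ s ∈ S, ∑ i ∈ I, F i * G (s - i) := by
  rw [sum_mul, sum_comm]
  refine sum_congr rfl fun i hi => ?_
  rw [← mul_sum]
  congr 1
  refine sum_bij_ne_zero (fun j _ _ => i + j) (fun j hj _ => hS i hi j hj)
    (fun _ _ _ _ _ _ => add_left_cancel)
    (fun s _ hs => ⟨s - i, by_contra fun h => hs (hG _ h), hs, add_sub_cancel _ _⟩)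
    (fun j _ _ => by rw [add_sub_cancel_left])

theorem sum_chooseZ_mul_sum_le_sq (m : ℕ) (c n : ℤ) {u v : ℤ → ℝ}
    (hu : IsPF2 u) (hv : IsPF2 v) (hu0 : ∀ k < 0, u k = 0) (hv0 : ∀ k < 0, v k = 0) :
    (∑ k ∈ Icc 0 (n + 2), chooseZ m (c + k) * u k * v (n - k)) *
        ∑ k ∈ Icc 0 (n + 2), chooseZ (m + 2) (c + k) * u k * v (n + 2 - k)
      ≤ (∑ k ∈ Icc 0 (n + 2), chooseZ (m + 1) (c + k) * u k * v (n + 1 - k)) ^ 2 := by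
  have hvanish (M : ℕ) (e : ℤ) (he : e ≤ n + 2) :
      ∀ j ∉ Icc 0 (n + 2), chooseZ M (c + j) * u j * v (e - j) = 0 := fun j hj => by
    rw [mem_Icc, not_and_or, not_le, not_le] at hj
    rcases hj with h | h
    · rw [hu0 j h, mul_zero, zero_mul]
    · rw [hv0 _ (by omega), mul_zero]
  have hS : ∀ i ∈ Icc 0 (n + 2), ∀ j ∈ Icc 0 (n + 2), i + j ∈ Icc 0 (2 * (n + 2)) := by
    intro i hi j hj; simp only [mem_Icc] at *; omega
  rw [sq, sum_mul_sum_eq_sum_sum_sub hS (hvanish _ _ le_rfl),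
    sum_mul_sum_eq_sum_sum_sub hS (hvanish _ _ (by omega))]
  refine sum_le_sum fun s _ => ?_
  have := sum_chooseZ_mul_le_of_isSymmUnimodal m c
    (hu.isSymmUnimodal hu0 0 s) (hv.isSymmUnimodal hv0 (n + 1 - s) s)
    (I := Icc 0 (n + 2)) fun i _ _ _ _ => mem_Icc.mpr (by omega)
  refine (sum_congr rfl fun i _ => ?_).trans_le (this.trans_eq (sum_congr rfl fun i _ => ?_)) <;>
    ring_nf

theorem sum_range_choose_eq_sum_Icc (M b N K : ℕ) (hN : N ≤ K) (x y : ℕ → ℝ) :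
    ∑ k ∈ range (N + 1), (M.choose (b + k) : ℝ) * x k * y (N - k)
      = ∑ k ∈ Icc (0 : ℤ) K, chooseZ M (b + k) * zeroExt x k * zeroExt y (N - k) := by
  have hval (k : ℕ) (hk : k ∈ range (N + 1)) : (M.choose (b + k) : ℝ) * x k * y (N - k) =
      chooseZ M (b + k) * zeroExt x k * zeroExt y (N - k) := by
    rw [← Nat.cast_sub (by rw [mem_range] at hk; omega), ← Nat.cast_add, chooseZ_natCast,
      zeroExt_natCast, zeroExt_natCast]
  refine sum_bij_ne_zero (fun k _ _ => k) (fun k hk _ => ?_)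
    (fun _ _ _ _ _ _ => Nat.cast_inj.mp)
    (fun k hk h => ?_) (fun k hk _ => hval k hk)
  · simp only [mem_range, mem_Icc] at hk ⊢; omega
  · have hkN : k ≤ N := by
      by_contra hkN
      exact h (by rw [zeroExt_of_neg y (by omega), mul_zero])
    lift k to ℕ using (mem_Icc.mp hk).1
    have hkr : k ∈ range (N + 1) := mem_range.mpr (by omega)
    exact ⟨k, hkr, by rwa [hval k hkr], rfl⟩

end BinomialLogConcave

open BinomialLogConcave

theorem stmt_16_general (a b : ℕ) (x y : ℕ → ℝ)
    (hxnonneg : ∀ k, 0 ≤ x k) (hynonneg : ∀ k, 0 ≤ y k)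
    (hxlc : ∀ k : ℕ, x k * x (k + 2) ≤ x (k + 1) ^ 2)
    (hylc : ∀ k : ℕ, y k * y (k + 2) ≤ y (k + 1) ^ 2)
    (hxniz : ∀ i j k : ℕ, i < j → j < k → x i ≠ 0 → x k ≠ 0 → x j ≠ 0)
    (hyniz : ∀ i j k : ℕ, i < j → j < k → y i ≠ 0 → y k ≠ 0 → y j ≠ 0)
    (z : ℕ → ℝ)
    (hz : ∀ n : ℕ, z n = ∑ k ∈ Finset.range (n + 1),
      ((a + n).choose (b + k) : ℝ) * x k * y (n - k)) :
    ∀ n : ℕ, z n * z (n + 2) ≤ z (n + 1) ^ 2 := by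
  intro n
  have hz' (N : ℕ) (hN : N ≤ n + 2) : z N = ∑ k ∈ Icc (0 : ℤ) (n + 2),
      chooseZ (a + N) (b + k) * zeroExt x k * zeroExt y (N - k) := by
    rw [hz, sum_range_choose_eq_sum_Icc _ _ _ (n + 2) hN]
    push_cast; rfl
  have h := sum_chooseZ_mul_sum_le_sq (a + n) b n (isPF2_zeroExt hxnonneg hxlc hxniz)
    (isPF2_zeroExt hynonneg hylc hyniz) (fun _ => zeroExt_of_neg x) (fun _ => zeroExt_of_neg y)
  rw [hz' n (by omega), hz' (n + 1) (by omega), hz' (n + 2) (by omega)]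
  push_cast
  simpa only [← add_assoc] using h

/-- Corollary 3.4: for integers `a ≥ b ≥ 0`, if `x`, `y` are
nonnegative log-concave sequences (no internal zeros), then
`z n = ∑_{k=0}^n C(a+n, b+k) x_k y_{n-k}` is log-concave. -/
theorem stmt_16 (a b : ℕ) (hab : b ≤ a) (x y : ℕ → ℝ)
    (hxnonneg : ∀ k, 0 ≤ x k) (hynonneg : ∀ k, 0 ≤ y k)
    (hxlc : ∀ k : ℕ, x k * x (k + 2) ≤ x (k + 1) ^ 2)
    (hylc : ∀ k : ℕ, y k * y (k + 2) ≤ y (k + 1) ^ 2)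
    (hxniz : ∀ i j k : ℕ, i < j → j < k → x i ≠ 0 → x k ≠ 0 → x j ≠ 0)
    (hyniz : ∀ i j k : ℕ, i < j → j < k → y i ≠ 0 → y k ≠ 0 → y j ≠ 0)
    (z : ℕ → ℝ)
    (hz : ∀ n : ℕ, z n = ∑ k ∈ Finset.range (n + 1),
      ((a + n).choose (b + k) : ℝ) * x k * y (n - k)) :
    ∀ n : ℕ, z n * z (n + 2) ≤ z (n + 1) ^ 2 :=
  stmt_16_general a b x y hxnonneg hynonneg hxlc hylc hxniz hyniz z hz
end

section
/- If the sequences $\{x_n\}$ and $\{y_n\}$ of nonnegative reals are log-concave (with no internal zeros), then so is their binomial convolution $z_n = \sum_{k=0}^n \binom{n}{k} x_k y_{n-k}$. -/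
/-!
Fix `n`. Expanding `z (n + 1) ^ 2 - z n * z (n + 2)` as a Cauchy product and grouping the terms by
the total index `s` of the two `x`-factors, each group reads
`∑ k, f k * (A k * g k - B k * g (k + 1))` with `f k = x k * x (s - k)`, `g` the matching product
of two `y`-values, and `A`, `B` products of binomial coefficients. Log-concavity without internal
zeros makes `f` and `g` symmetric about `s / 2` and nondecreasing up to `s / 2`, hence nonnegative
combinations of indicators of windows `[m, s - m]`. On a pair of windows the sum telescopes by
Pascal's rule to a difference of two products of binomial coefficients, whose sign follows from the
monotonicity of the ratios `C(n + 1, k) / C(n, k) = (n + 1) / (n + 1 - k)` and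
`C(n + 1, k + 1) / C(n, k) = (n + 1) / (k + 1)`.
-/

open Finset

namespace BinomialConvolution

theorem sum_Icc_comp_sub_right {M : Type*} [AddCommMonoid M] (F : ℤ → M) (a b c : ℤ) :
    ∑ k ∈ Icc a b, F (k - c) = ∑ k ∈ Icc (a - c) (b - c), F k := by
  simp only [sub_eq_add_neg]
  rw [← map_add_right_Icc, sum_map]
  rfl

theorem sum_Icc_sub_add_one {M : Type*} [AddCommGroup M] (F : ℤ → M) {a b : ℤ}
    (hab : a - 1 ≤ b) :
    ∑ k ∈ Icc a b, (F k - F (k + 1)) = F a - F (b + 1) := by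
  induction b, hab using Int.leInduction with
  | base => simp
  | succ b hb ih =>
    rw [← insert_Icc_right_eq_Icc_add_one (by omega), sum_insert (by simp), ih]
    abel

theorem sum_Icc_sub_sub_one {M : Type*} [AddCommGroup M] (F : ℤ → M) {a b : ℤ}
    (hab : a - 1 ≤ b) :
    ∑ k ∈ Icc a b, (F k - F (k - 1)) = F b - F (a - 1) := by
  simpa only [add_sub_cancel_right, sub_neg_eq_add, neg_add_eq_sub] using
    sum_Icc_sub_add_one (fun k ↦ -F (k - 1)) hab

-- Binomial coefficients and sequences are extended by zero to integer indices, so that sums can be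
-- shifted and reflected without truncated subtraction.
noncomputable def intChoose (n : ℕ) (k : ℤ) : ℝ :=
  if 0 ≤ k then (n.choose k.toNat : ℝ) else 0

theorem intChoose_nonneg (n : ℕ) (k : ℤ) : 0 ≤ intChoose n k := by
  unfold intChoose; split_ifs <;> positivity

theorem intChoose_natCast (n k : ℕ) : intChoose n k = n.choose k := by
  simp [intChoose]

theorem intChoose_of_neg (n : ℕ) {k : ℤ} (hk : k < 0) : intChoose n k = 0 := by
  simp [intChoose, not_le.mpr hk]

theorem intChoose_of_lt (n : ℕ) {k : ℤ} (hk : n < k) : intChoose n k = 0 := by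
  lift k to ℕ using by omega
  rw [intChoose_natCast, Nat.choose_eq_zero_of_lt (by omega), Nat.cast_zero]

theorem intChoose_succ (n : ℕ) (k : ℤ) :
    intChoose (n + 1) k = intChoose n k + intChoose n (k - 1) := by
  rcases lt_trichotomy k 0 with hk | rfl | hk
  · rw [intChoose_of_neg _ hk, intChoose_of_neg _ hk, intChoose_of_neg _ (by omega), add_zero]
  · simp [intChoose]
  · obtain ⟨k, rfl⟩ : ∃ j : ℕ, k = j + 1 := ⟨(k - 1).toNat, by omega⟩
    rw [add_sub_cancel_right, ← Nat.cast_succ, intChoose_natCast, intChoose_natCast,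
      intChoose_natCast, Nat.choose_succ_succ', Nat.cast_add, add_comm]

theorem sub_mul_intChoose_succ (n : ℕ) (k : ℤ) :
    ((n : ℝ) + 1 - k) * intChoose (n + 1) k = ((n : ℝ) + 1) * intChoose n k := by
  rcases lt_or_ge k 0 with hk | hk
  · rw [intChoose_of_neg _ hk, intChoose_of_neg _ hk, mul_zero, mul_zero]
  lift k to ℕ using hk
  rcases le_or_gt k (n + 1) with hkn | hkn
  · have := congrArg (Nat.cast (R := ℝ)) (Nat.choose_mul_succ_eq n k)
    push_cast [Nat.cast_sub hkn] at this
    rw [intChoose_natCast, intChoose_natCast]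
    push_cast
    linarith
  · rw [intChoose_of_lt _ (by omega), intChoose_of_lt _ (by omega), mul_zero, mul_zero]

theorem succ_mul_intChoose_succ_succ (n : ℕ) (k : ℤ) :
    ((k : ℝ) + 1) * intChoose (n + 1) (k + 1) = ((n : ℝ) + 1) * intChoose n k := by
  rcases lt_or_ge k 0 with hk | hk
  · rcases (show k = -1 ∨ k + 1 < 0 by omega) with rfl | hk'
    · norm_num [intChoose_of_neg n hk]
    · rw [intChoose_of_neg _ hk', intChoose_of_neg _ hk, mul_zero, mul_zero]
  lift k to ℕ using hk
  have := congrArg (Nat.cast (R := ℝ)) (Nat.add_one_mul_choose_eq n k)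
  push_cast at this
  rw [← Nat.cast_succ, intChoose_natCast, intChoose_natCast]
  push_cast
  linarith

theorem intChoose_succ_mul_le (n : ℕ) {j j' : ℤ} (h : j ≤ j') :
    intChoose (n + 1) j * intChoose n j' ≤ intChoose n j * intChoose (n + 1) j' := by
  have hdiff : ((n : ℝ) + 1) *
      (intChoose n j * intChoose (n + 1) j' - intChoose (n + 1) j * intChoose n j')
      = (j' - j) * (intChoose (n + 1) j * intChoose (n + 1) j') := by
    linear_combination intChoose (n + 1) j * sub_mul_intChoose_succ n j'
      - intChoose (n + 1) j' * sub_mul_intChoose_succ n j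
  have hjj' : (0 : ℝ) ≤ j' - j := sub_nonneg.mpr (by exact_mod_cast h)
  refine sub_nonneg.mp (nonneg_of_mul_nonneg_right (a := (n : ℝ) + 1) ?_ (by positivity))
  rw [hdiff]
  exact mul_nonneg hjj' (mul_nonneg (intChoose_nonneg _ _) (intChoose_nonneg _ _))

theorem intChoose_mul_succ_succ_le (n : ℕ) {j j' : ℤ} (hj : 0 ≤ j) (h : j ≤ j') :
    intChoose n j * intChoose (n + 1) (j' + 1) ≤ intChoose n j' * intChoose (n + 1) (j + 1) := by
  have hdiff : ((j : ℝ) + 1) * ((j' : ℝ) + 1) *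
      (intChoose n j' * intChoose (n + 1) (j + 1) - intChoose n j * intChoose (n + 1) (j' + 1))
      = ((n : ℝ) + 1) * (j' - j) * (intChoose n j * intChoose n j') := by
    linear_combination ((j' : ℝ) + 1) * intChoose n j' * succ_mul_intChoose_succ_succ n j
      - ((j : ℝ) + 1) * intChoose n j * succ_mul_intChoose_succ_succ n j'
  have hj0 : (0 : ℝ) ≤ j := by exact_mod_cast hj
  have hjj' : (j : ℝ) ≤ j' := by exact_mod_cast h
  refine sub_nonneg.mp (nonneg_of_mul_nonneg_right (a := ((j : ℝ) + 1) * ((j' : ℝ) + 1)) ?_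
    (mul_pos (by linarith) (by linarith)))
  rw [hdiff]
  exact mul_nonneg (mul_nonneg (by positivity : (0 : ℝ) ≤ n + 1) (sub_nonneg.mpr hjj'))
    (mul_nonneg (intChoose_nonneg _ _) (intChoose_nonneg _ _))

noncomputable def extendByZero (x : ℕ → ℝ) (k : ℤ) : ℝ := if 0 ≤ k then x k.toNat else 0

theorem extendByZero_natCast (x : ℕ → ℝ) (k : ℕ) : extendByZero x k = x k := by
  simp [extendByZero]

theorem extendByZero_of_neg (x : ℕ → ℝ) {k : ℤ} (hk : k < 0) : extendByZero x k = 0 := by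
  simp [extendByZero, not_le.mpr hk]

structure IsLogConcave (x : ℕ → ℝ) : Prop where
  nonneg : ∀ k, 0 ≤ x k
  mul_le_sq : ∀ k, x k * x (k + 2) ≤ x (k + 1) ^ 2
  no_internal_zeros : ∀ i j k, i < j → j < k → x i ≠ 0 → x k ≠ 0 → x j ≠ 0

namespace IsLogConcave

variable {x : ℕ → ℝ}

theorem mul_le_mul_inner (hx : IsLogConcave x) (d a : ℕ) :
    x a * x (a + d + 2) ≤ x (a + 1) * x (a + d + 1) := by
  induction d with
  | zero => simpa [sq] using hx.mul_le_sq a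
  | succ d ih =>
    rw [show a + (d + 1) + 2 = a + d + 3 by omega, show a + (d + 1) + 1 = a + d + 2 by omega]
    by_cases hend : x a = 0 ∨ x (a + d + 3) = 0
    · rcases hend with h | h <;> simp only [h, zero_mul, mul_zero] <;>
        exact mul_nonneg (hx.nonneg _) (hx.nonneg _)
    rw [not_or] at hend
    have hpos : ∀ j, a < j → j < a + d + 3 → 0 < x j := fun j h₁ h₂ ↦
      (hx.nonneg j).lt_of_ne' (hx.no_internal_zeros a j _ h₁ h₂ hend.1 hend.2)
    have lc := hx.mul_le_sq (a + d + 1)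
    rw [show a + d + 1 + 2 = a + d + 3 by omega, show a + d + 1 + 1 = a + d + 2 by omega] at lc
    have h₁ := hpos (a + d + 1) (by omega) (by omega)
    have h₂ := hpos (a + d + 2) (by omega) (by omega)
    have hscaled : x a * x (a + d + 3) * (x (a + d + 1) * x (a + d + 2))
        ≤ x (a + 1) * x (a + d + 2) * (x (a + d + 1) * x (a + d + 2)) := by
      calc x a * x (a + d + 3) * (x (a + d + 1) * x (a + d + 2))
          = x a * x (a + d + 2) * (x (a + d + 1) * x (a + d + 3)) := by ring
        _ ≤ x (a + 1) * x (a + d + 1) * x (a + d + 2) ^ 2 :=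
          _root_.mul_le_mul ih lc (mul_nonneg h₁.le (hx.nonneg _))
            (mul_nonneg (hx.nonneg _) h₁.le)
        _ = _ := by ring
    exact le_of_mul_le_mul_right hscaled (mul_pos h₁ h₂)

theorem extendByZero_mul_le (hx : IsLogConcave x) {i j : ℤ} (hij : i ≤ j) :
    extendByZero x (i - 1) * extendByZero x (j + 1) ≤ extendByZero x i * extendByZero x j := by
  have hX : ∀ k, 0 ≤ extendByZero x k := fun k ↦ by
    unfold extendByZero; split_ifs
    exacts [hx.nonneg _, le_rfl]
  rcases le_or_gt i 0 with hi | hi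
  · rw [extendByZero_of_neg x (by omega), zero_mul]
    exact mul_nonneg (hX i) (hX j)
  obtain ⟨a, rfl⟩ : ∃ a : ℕ, i = a + 1 := ⟨(i - 1).toNat, by omega⟩
  obtain ⟨d, rfl⟩ : ∃ d : ℕ, j = a + d + 1 := ⟨(j - a - 1).toNat, by omega⟩
  have := hx.mul_le_mul_inner d a
  simp only [← extendByZero_natCast] at this
  push_cast at this
  simpa only [add_sub_cancel_right, add_assoc, one_add_one_eq_two] using this

end IsLogConcave

def window (s m k : ℤ) : ℝ := if m ≤ k ∧ k ≤ s - m then 1 else 0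

theorem sum_window_mul {K : Finset ℤ} {s m : ℤ} (hK : Icc m (s - m) ⊆ K) (F : ℤ → ℝ) :
    ∑ k ∈ K, window s m k * F k = ∑ k ∈ Icc m (s - m), F k := by
  simp only [window, ite_mul, one_mul, zero_mul]
  rw [← sum_filter]
  congr 1
  ext k
  have := @hK k
  simp only [mem_filter, mem_Icc] at this ⊢
  tauto

theorem eq_sum_sub_mul_window {F : ℤ → ℝ} {s lo : ℤ} (hzero : ∀ j < lo, F j = 0)
    (hsymm : ∀ j, F (s - j) = F j) (k : ℤ) :
    F k = ∑ m ∈ Icc lo (s / 2), (F m - F (m - 1)) * window s m k := by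
  set t := min k (s - k)
  have hFt : F k = F t := by
    rcases min_choice k (s - k) with h | h <;> simp only [t, h, hsymm]
  have hterm : ∀ m ∈ Icc lo (s / 2),
      (F m - F (m - 1)) * window s m k = if m ∈ Icc lo t then F m - F (m - 1) else 0 := by
    intro m hm
    simp only [mem_Icc] at hm
    simp only [window, mem_Icc, mul_ite, mul_one, mul_zero]
    exact if_congr (by omega) rfl rfl
  rw [sum_congr rfl hterm, ← sum_filter, filter_mem_eq_inter, inter_eq_right.mpr
    (Icc_subset_Icc_right (by omega)), hFt]
  rcases lt_or_ge t lo with ht | ht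
  · rw [Icc_eq_empty_of_lt ht, sum_empty, hzero t ht]
  · rw [sum_Icc_sub_sub_one F (by omega), hzero (lo - 1) (by omega), sub_zero]

structure IsSymmUnimodal (s lo : ℤ) (F : ℤ → ℝ) : Prop where
  eq_zero_of_lt : ∀ j < lo, F j = 0
  symm : ∀ j, F (s - j) = F j
  le_of_two_mul_le : ∀ m, 2 * m ≤ s → F (m - 1) ≤ F m

-- The sum is bilinear in `(f, g)`, and by `eq_sum_sub_mul_window` both are nonnegative
-- combinations of windows.
theorem sum_mul_sub_nonneg {s lo lo' : ℤ} {f g : ℤ → ℝ} (hf : IsSymmUnimodal s lo f)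
    (hg : IsSymmUnimodal s lo' g) (K : Finset ℤ) (A B : ℤ → ℝ)
    (hwindow : ∀ m ∈ Icc lo (s / 2), ∀ m' ∈ Icc lo' (s / 2),
      0 ≤ ∑ k ∈ K, window s m k * (A k * window s m' k - B k * window s m' (k + 1))) :
    0 ≤ ∑ k ∈ K, f k * (A k * g k - B k * g (k + 1)) := by
  have expand : ∀ k ∈ K, f k * (A k * g k - B k * g (k + 1)) =
      ∑ m ∈ Icc lo (s / 2), ∑ m' ∈ Icc lo' (s / 2),
        (f m - f (m - 1)) * (g m' - g (m' - 1)) *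
        (window s m k * (A k * window s m' k - B k * window s m' (k + 1))) := by
    intro k _
    rw [eq_sum_sub_mul_window hf.eq_zero_of_lt hf.symm k,
      eq_sum_sub_mul_window hg.eq_zero_of_lt hg.symm k,
      eq_sum_sub_mul_window hg.eq_zero_of_lt hg.symm (k + 1), mul_sum, mul_sum,
      ← sum_sub_distrib, sum_mul_sum]
    exact sum_congr rfl fun m _ ↦ sum_congr rfl fun m' _ ↦ by ring
  rw [sum_congr rfl expand, sum_comm]
  refine sum_nonneg fun m hm ↦ ?_
  rw [sum_comm]
  refine sum_nonneg fun m' hm' ↦ ?_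
  rw [← mul_sum]
  refine mul_nonneg (mul_nonneg ?_ ?_) (hwindow m hm m' hm')
  · exact sub_nonneg.mpr (hf.le_of_two_mul_le m (by simp only [mem_Icc] at hm; omega))
  · exact sub_nonneg.mpr (hg.le_of_two_mul_le m' (by simp only [mem_Icc] at hm'; omega))

theorem IsLogConcave.isSymmUnimodal_extendByZero_mul {x : ℕ → ℝ} (hx : IsLogConcave x)
    (s c : ℤ) :
    IsSymmUnimodal s (s - c) fun j ↦ extendByZero x (c - j) * extendByZero x (j + c - s) where
  eq_zero_of_lt j hj := by rw [extendByZero_of_neg x (k := j + c - s) (by omega), mul_zero]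
  symm j := by ring_nf
  le_of_two_mul_le m hm := by
    have := hx.extendByZero_mul_le (show m + c - s ≤ c - m by omega)
    ring_nf at this ⊢
    linarith

section BinomialWindows

variable (n : ℕ) {s m m' : ℤ}

theorem sum_window_binomial_nonneg_of_le (hm : 0 ≤ m) (hms : 2 * m ≤ s)
    (hm' : s - (n + 1) ≤ m') (hmm' : m' ≤ m) :
    0 ≤ ∑ k ∈ Icc (0 : ℤ) (n + 2), window s m k *
      (intChoose (n + 1) k * intChoose (n + 1) (s - k) * window s m' k
        - intChoose n k * intChoose (n + 2) (s - k) * window s m' (k + 1)) := by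
  set D : ℤ → ℝ := fun t ↦ intChoose n (t - 1) * intChoose (n + 1) (s - t)
  have pascal : ∀ k ∈ Icc m (s - m), intChoose (n + 1) k * intChoose (n + 1) (s - k)
      - intChoose n k * intChoose (n + 2) (s - k) = D k - D (k + 1) := by
    intro k _
    simp only [D, add_sub_cancel_right, show s - (k + 1) = s - k - 1 by ring]
    linear_combination intChoose (n + 1) (s - k) * intChoose_succ n k
      - intChoose n k * intChoose_succ (n + 1) (s - k)
  have hpointwise : ∀ k ∈ Icc (0 : ℤ) (n + 2),
      window s m k * (intChoose (n + 1) k * intChoose (n + 1) (s - k)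
        - intChoose n k * intChoose (n + 2) (s - k)) ≤
      window s m k * (intChoose (n + 1) k * intChoose (n + 1) (s - k) * window s m' k
        - intChoose n k * intChoose (n + 2) (s - k) * window s m' (k + 1)) := by
    intro k _
    have := mul_nonneg (intChoose_nonneg n k) (intChoose_nonneg (n + 2) (s - k))
    unfold window
    split_ifs <;> first | omega | linarith
  calc 0 ≤ D m - D (s - m + 1) := by
        have := intChoose_succ_mul_le n (show m - 1 ≤ s - m by omega)
        simp only [D, sub_nonneg, add_sub_cancel_right, show s - (s - m + 1) = m - 1 by ring]
        linarith
    _ = ∑ k ∈ Icc (0 : ℤ) (n + 2), window s m k *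
          (intChoose (n + 1) k * intChoose (n + 1) (s - k)
            - intChoose n k * intChoose (n + 2) (s - k)) := by
      rw [sum_window_mul (Icc_subset_Icc hm (by omega)), sum_congr rfl pascal,
        sum_Icc_sub_add_one D (by omega)]
    _ ≤ _ := sum_le_sum hpointwise

theorem sum_window_binomial_nonneg_of_lt (hm : 0 ≤ m) (hm' : s - (n + 1) ≤ m')
    (hm's : 2 * m' ≤ s) (hmm' : m < m') :
    0 ≤ ∑ k ∈ Icc (0 : ℤ) (n + 2), window s m k *
      (intChoose (n + 1) k * intChoose (n + 1) (s - k) * window s m' k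
        - intChoose n k * intChoose (n + 2) (s - k) * window s m' (k + 1)) := by
  set E : ℤ → ℝ := fun t ↦ intChoose n t * intChoose (n + 1) (s - t)
  have pascal : ∀ k ∈ Icc m' (s - m'), intChoose (n + 1) k * intChoose (n + 1) (s - k)
      - intChoose n (k - 1) * intChoose (n + 2) (s - (k - 1)) = E k - E (k - 1) := by
    intro k _
    simp only [E, show s - (k - 1) = s - k + 1 by ring]
    have := intChoose_succ (n + 1) (s - k + 1)
    rw [add_sub_cancel_right] at this
    linear_combination intChoose (n + 1) (s - k) * intChoose_succ n k
      - intChoose n (k - 1) * this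
  -- `window s m' (k + 1) = window (s - 2) (m' - 1) k`, and both windows of `m'` lie in that of `m`
  have hpointwise : ∀ k ∈ Icc (0 : ℤ) (n + 2), window s m k *
      (intChoose (n + 1) k * intChoose (n + 1) (s - k) * window s m' k
        - intChoose n k * intChoose (n + 2) (s - k) * window s m' (k + 1)) =
      window s m' k * (intChoose (n + 1) k * intChoose (n + 1) (s - k))
        - window (s - 2) (m' - 1) k * (intChoose n k * intChoose (n + 2) (s - k)) := by
    intro k _
    unfold window
    split_ifs <;> first | omega | ring
  have hshift : Icc (m' - 1) (s - 2 - (m' - 1)) = Icc (m' - 1) (s - m' - 1) := by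
    congr 1; ring
  calc 0 ≤ E (s - m') - E (m' - 1) := by
        have := intChoose_mul_succ_succ_le n (show 0 ≤ m' - 1 by omega)
          (show m' - 1 ≤ s - m' by omega)
        rw [sub_add_cancel] at this
        simp only [E, sub_nonneg, sub_sub_cancel,
          show s - (m' - 1) = s - m' + 1 by ring]
        linarith
    _ = _ := by
      rw [sum_congr rfl hpointwise, sum_sub_distrib,
        sum_window_mul (Icc_subset_Icc (by omega) (by omega)),
        sum_window_mul (Icc_subset_Icc (by omega) (by omega)), hshift,
        ← sum_Icc_comp_sub_right, ← sum_sub_distrib, sum_congr rfl pascal,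
        sum_Icc_sub_sub_one E (by omega)]

theorem sum_window_binomial_nonneg (hm : 0 ≤ m) (hms : 2 * m ≤ s)
    (hm' : s - (n + 1) ≤ m') (hm's : 2 * m' ≤ s) :
    0 ≤ ∑ k ∈ Icc (0 : ℤ) (n + 2), window s m k *
      (intChoose (n + 1) k * intChoose (n + 1) (s - k) * window s m' k
        - intChoose n k * intChoose (n + 2) (s - k) * window s m' (k + 1)) := by
  rcases le_or_gt m' m with hmm' | hmm'
  · exact sum_window_binomial_nonneg_of_le n hm hms hm' hmm'
  · exact sum_window_binomial_nonneg_of_lt n hm hm' hm's hmm'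

end BinomialWindows

section Convolution

theorem sum_Icc_mul_sum_Icc {R : Type*} [NonUnitalNonAssocSemiring R] (P Q : ℤ → R) {N : ℤ}
    (hQ : ∀ l, l < 0 ∨ N < l → Q l = 0) :
    (∑ k ∈ Icc 0 N, P k) * ∑ l ∈ Icc 0 N, Q l
      = ∑ s ∈ Icc 0 (2 * N), ∑ k ∈ Icc 0 N, P k * Q (s - k) := by
  rw [sum_mul_sum, sum_comm (s := Icc 0 (2 * N))]
  refine sum_congr rfl fun k hk ↦ ?_
  simp only [mem_Icc] at hk
  rw [sum_Icc_comp_sub_right (fun l ↦ P k * Q l)]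
  refine sum_subset (Icc_subset_Icc (by omega) (by omega)) fun l _ hl ↦ ?_
  simp only [mem_Icc] at hl
  rw [hQ l (by omega), mul_zero]

variable (x y : ℕ → ℝ)

noncomputable def binomialTerm (p : ℕ) (k : ℤ) : ℝ :=
  intChoose p k * extendByZero x k * extendByZero y (p - k)

theorem binomialTerm_eq_zero {p : ℕ} {k : ℤ} (hk : k < 0 ∨ p < k) :
    binomialTerm x y p k = 0 := by
  rcases hk with hk | hk
  · rw [binomialTerm, intChoose_of_neg p hk, zero_mul, zero_mul]
  · rw [binomialTerm, intChoose_of_lt p hk, zero_mul, zero_mul]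

theorem sum_range_eq_sum_Icc_binomialTerm {p : ℕ} {N : ℤ} (hpN : p ≤ N) :
    ∑ k ∈ range (p + 1), (p.choose k : ℝ) * x k * y (p - k)
      = ∑ k ∈ Icc 0 N, binomialTerm x y p k := by
  rw [← sum_subset (Icc_subset_Icc_right hpN) fun k _ hk ↦
    binomialTerm_eq_zero x y (by simp only [mem_Icc] at hk; omega)]
  refine sum_nbij' (↑) Int.toNat (fun k hk ↦ ?_) (fun k hk ↦ ?_) (fun k _ ↦ rfl)
    (fun k hk ↦ ?_) (fun k hk ↦ ?_)
  all_goals simp only [mem_range, mem_Icc] at hk ⊢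
  iterate 3 omega
  rw [binomialTerm, intChoose_natCast, extendByZero_natCast, ← Nat.cast_sub (by omega),
    extendByZero_natCast]

theorem sum_binomialTerm_sub_nonneg {x y} (hx : IsLogConcave x) (hy : IsLogConcave y) (n : ℕ)
    (s : ℤ) :
    0 ≤ ∑ k ∈ Icc (0 : ℤ) (n + 2),
      (binomialTerm x y (n + 1) k * binomialTerm x y (n + 1) (s - k)
        - binomialTerm x y n k * binomialTerm x y (n + 2) (s - k)) := by
  -- the `x`-factors `x k * x (s - k)` are common to both products
  have hterm : ∀ k ∈ Icc (0 : ℤ) (n + 2),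
      binomialTerm x y (n + 1) k * binomialTerm x y (n + 1) (s - k)
        - binomialTerm x y n k * binomialTerm x y (n + 2) (s - k) =
      extendByZero x (s - k) * extendByZero x (k + s - s) *
        (intChoose (n + 1) k * intChoose (n + 1) (s - k) *
          (extendByZero y ((n + 1 : ℕ) - k) * extendByZero y (k + (n + 1 : ℕ) - s))
        - intChoose n k * intChoose (n + 2) (s - k) *
          (extendByZero y ((n + 1 : ℕ) - (k + 1)) *
            extendByZero y (k + 1 + (n + 1 : ℕ) - s))) := by
    intro k _
    simp only [binomialTerm]
    push_cast
    ring_nf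
  rw [sum_congr rfl hterm]
  refine sum_mul_sub_nonneg (hx.isSymmUnimodal_extendByZero_mul s s)
    (hy.isSymmUnimodal_extendByZero_mul s (n + 1 : ℕ)) _ _ _
    fun m hm m' hm' ↦ ?_
  simp only [mem_Icc] at hm hm'
  exact sum_window_binomial_nonneg n (by omega) (by omega) (by omega) (by omega)

end Convolution

end BinomialConvolution

open BinomialConvolution in
/-- Corollary 3.5: the binomial convolution of two nonnegative
log-concave sequences (with no internal zeros) is log-concave. -/
theorem stmt_17 (x y : ℕ → ℝ)
    (hxnonneg : ∀ k, 0 ≤ x k) (hynonneg : ∀ k, 0 ≤ y k)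
    (hxlc : ∀ k : ℕ, x k * x (k + 2) ≤ x (k + 1) ^ 2)
    (hylc : ∀ k : ℕ, y k * y (k + 2) ≤ y (k + 1) ^ 2)
    (hxniz : ∀ i j k : ℕ, i < j → j < k → x i ≠ 0 → x k ≠ 0 → x j ≠ 0)
    (hyniz : ∀ i j k : ℕ, i < j → j < k → y i ≠ 0 → y k ≠ 0 → y j ≠ 0)
    (z : ℕ → ℝ)
    (hz : ∀ n : ℕ, z n = ∑ k ∈ Finset.range (n + 1),
      (n.choose k : ℝ) * x k * y (n - k)) :
    ∀ n : ℕ, z n * z (n + 2) ≤ z (n + 1) ^ 2 := by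
  intro n
  have hz' : ∀ p ≤ n + 2, z p = ∑ k ∈ Icc (0 : ℤ) (n + 2), binomialTerm x y p k :=
    fun p hp ↦ (hz p).trans (sum_range_eq_sum_Icc_binomialTerm x y (by omega))
  have hvanish : ∀ p ≤ n + 2, ∀ l : ℤ, l < 0 ∨ n + 2 < l → binomialTerm x y p l = 0 :=
    fun p hp l hl ↦ binomialTerm_eq_zero x y (by omega)
  rw [← sub_nonneg, sq, hz' n (by omega), hz' (n + 1) (by omega), hz' (n + 2) le_rfl,
    sum_Icc_mul_sum_Icc _ _ (hvanish (n + 1) (by omega)),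
    sum_Icc_mul_sum_Icc _ _ (hvanish (n + 2) le_rfl), ← sum_sub_distrib]
  refine sum_nonneg fun s _ ↦ ?_
  rw [← sum_sub_distrib]
  exact sum_binomialTerm_sub_nonneg ⟨hxnonneg, hxlc, hxniz⟩ ⟨hynonneg, hylc, hyniz⟩ n s
end

section
/- Let $a \ge b \ge 0$ be integers. If the sequences $\{x_k\}$ and $\{y_k\}$ of nonnegative reals are log-concave (with no internal zeros), then the sequence $z_n = \sum_{k=0}^n \binom{a-n}{b-k} x_k y_{n-k}$, defined for $0 \le n \le a$, is log-concave. -/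
/-!
Substituting `k ↦ b - k` writes `z n` as the binomial convolution
`W_M = ∑ k, C(M, k) X_k Y_(M-k)` at `M = a - n`, where `X_k = x_(b-k)` and `Y_j = y_(a-b-j)` are
again log-concave. So it suffices to show that `W` is log-concave (Walkup's theorem).

Expand `W_M W_(M+2)` and `W_(M+1)^2` and group the terms by `P = i + k`. In each group the
`X`-factor `X_i X_(P-i)` and the `Y`-factor are symmetric about `P/2` and nonincreasing away from
it, because `X` and `Y` are log-concave without internal zeros. Decompose both factors into
nonnegative combinations of indicators of the symmetric windows `[P - r, r]` (layer cake).
The inequality then reduces to comparing the sums of `C(M+2, i) C(M, P-i)` and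
`C(M+1, i) C(M+1, P-i)` over two windows. By Pascal's rule these differences telescope, and
the sign comes from `C(M+1, j) / C(M, j)` increasing in `j`.
-/

open Finset

lemma sum_eq_sum_of_support_subset {α M : Type*} [AddCommMonoid M] (f : α → M) {s t : Finset α}
    (hs : Function.support f ⊆ s) (ht : Function.support f ⊆ t) :
    ∑ i ∈ s, f i = ∑ i ∈ t, f i :=
  (finsum_eq_sum_of_support_subset f hs).symm.trans (finsum_eq_sum_of_support_subset f ht)

lemma Int.sum_Icc_sub {M : Type*} [AddCommGroup M] (f : ℤ → M) {a b : ℤ} (h : a ≤ b + 1) :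
    ∑ i ∈ Icc a b, (f (i + 1) - f i) = f (b + 1) - f a := by
  obtain ⟨n, rfl⟩ : ∃ n : ℕ, b = a - 1 + n := ⟨(b - a + 1).toNat, by omega⟩
  clear h
  induction n with
  | zero => simp
  | succ n ih =>
    rw [Nat.cast_succ, ← add_assoc, ← insert_Icc_right_eq_Icc_add_one (by omega),
      sum_insert (by simp), ih]
    abel

lemma Int.sum_Icc_sub' {M : Type*} [AddCommGroup M] (f : ℤ → M) {a b : ℤ} (h : a ≤ b + 1) :
    ∑ i ∈ Icc a b, (f i - f (i + 1)) = f a - f (b + 1) := by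
  simpa only [Pi.neg_apply, neg_sub_neg] using Int.sum_Icc_sub (-f) h

lemma sum_Icc_mul_sum_Icc {R : Type*} [NonUnitalNonAssocSemiring R] (u v : ℤ → R) {K : ℤ}
    (hu : Function.support u ⊆ Set.Icc 0 K) (hv : Function.support v ⊆ Set.Icc 0 K) :
    (∑ i ∈ Icc 0 K, u i) * ∑ k ∈ Icc 0 K, v k =
      ∑ P ∈ Icc 0 (2 * K), ∑ i ∈ Icc (P - K) K, u i * v (P - i) := by
  rw [sum_mul_sum]
  calc ∑ i ∈ Icc 0 K, ∑ k ∈ Icc 0 K, u i * v k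
      = ∑ i ∈ Icc 0 K, ∑ P ∈ Icc 0 (2 * K), u i * v (P - i) := by
        refine sum_congr rfl fun i hi ↦ ?_
        rw [mem_Icc] at hi
        rw [sum_eq_sum_of_support_subset (fun P ↦ u i * v (P - i)) (s := Icc 0 (2 * K))
          (t := Icc (0 + i) (K + i)), ← map_add_right_Icc, sum_map]
        · simp only [addRightEmbedding_apply, add_sub_cancel_right]
        all_goals
          intro P hP
          obtain ⟨h₁, h₂⟩ := hv (right_ne_zero_of_mul hP)
          simp only [coe_Icc, Set.mem_Icc]; omega
    _ = ∑ P ∈ Icc 0 (2 * K), ∑ i ∈ Icc 0 K, u i * v (P - i) := sum_comm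
    _ = _ := sum_congr rfl fun P _ ↦ sum_eq_sum_of_support_subset _
      (fun i hi ↦ by
        obtain ⟨h₁, h₂⟩ := hu (left_ne_zero_of_mul hi)
        simp only [coe_Icc, Set.mem_Icc]; omega)
      (fun i hi ↦ by
        obtain ⟨h₁, h₂⟩ := hu (left_ne_zero_of_mul hi)
        obtain ⟨h₃, h₄⟩ := hv (right_ne_zero_of_mul hi)
        simp only [coe_Icc, Set.mem_Icc]; omega)

-- `m.choose j` for integer `j`: zero for `j < 0`, and (as `Nat.choose`) for `j > m`.
noncomputable def intChoose (m : ℕ) (j : ℤ) : ℝ := if 0 ≤ j then (m.choose j.toNat : ℝ) else 0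

lemma intChoose_nonneg (m : ℕ) (j : ℤ) : 0 ≤ intChoose m j := by
  unfold intChoose; split_ifs <;> positivity

@[simp] lemma intChoose_natCast (m j : ℕ) : intChoose m j = m.choose j := by
  simp [intChoose]

lemma intChoose_eq_zero {m : ℕ} {j : ℤ} (h : j < 0 ∨ (m : ℤ) < j) : intChoose m j = 0 := by
  unfold intChoose
  split_ifs with hj
  · rw [Nat.choose_eq_zero_of_lt (by omega), Nat.cast_zero]
  · rfl

lemma support_intChoose_subset (m : ℕ) : Function.support (intChoose m) ⊆ Set.Icc 0 m :=
  fun j hj ↦ by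
    by_contra h
    rw [Set.mem_Icc, not_and_or, not_le, not_le] at h
    exact hj (intChoose_eq_zero h)

lemma intChoose_succ (m : ℕ) (j : ℤ) :
    intChoose (m + 1) j = intChoose m j + intChoose m (j - 1) := by
  rcases lt_or_ge j 0 with hj | hj
  · simp [intChoose_eq_zero (Or.inl hj), intChoose_eq_zero (Or.inl (by omega : j - 1 < 0))]
  rcases hj.eq_or_lt with rfl | hj
  · simp [intChoose]
  obtain ⟨k, rfl⟩ : ∃ k : ℕ, j = k + 1 := ⟨(j - 1).toNat, by omega⟩
  rw [add_sub_cancel_right, ← Nat.cast_add_one]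
  simp only [intChoose_natCast]
  rw [Nat.choose_succ_succ', Nat.cast_add, add_comm]

lemma choose_mul_choose_succ_le (m : ℕ) {A B : ℕ} (h : B ≤ A) :
    m.choose A * (m + 1).choose B ≤ (m + 1).choose A * m.choose B := by
  refine Nat.le_of_mul_le_mul_right (c := m + 1) ?_ m.succ_pos
  calc m.choose A * (m + 1).choose B * (m + 1)
      = (m + 1).choose A * (m + 1).choose B * (m + 1 - A) := by
        rw [mul_right_comm, Nat.choose_mul_succ_eq]; ring
    _ ≤ (m + 1).choose A * (m + 1).choose B * (m + 1 - B) := by gcongr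
    _ = (m + 1).choose A * m.choose B * (m + 1) := by
        rw [mul_assoc, ← Nat.choose_mul_succ_eq, mul_assoc]

lemma choose_succ_mul_choose_le (m : ℕ) {A B : ℕ} (h : B ≤ A) :
    (m + 1).choose (A + 1) * m.choose B ≤ (m + 1).choose (B + 1) * m.choose A := by
  refine Nat.le_of_mul_le_mul_left (c := m + 1) ?_ m.succ_pos
  calc (m + 1) * ((m + 1).choose (A + 1) * m.choose B)
      = (m + 1).choose (A + 1) * (m + 1).choose (B + 1) * (B + 1) := by
        rw [mul_left_comm, Nat.add_one_mul_choose_eq]; ring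
    _ ≤ (m + 1).choose (A + 1) * (m + 1).choose (B + 1) * (A + 1) := by gcongr
    _ = (m + 1) * ((m + 1).choose (B + 1) * m.choose A) := by
        rw [mul_left_comm, Nat.add_one_mul_choose_eq]; ring

lemma intChoose_mul_intChoose_succ_le (m : ℕ) {α β : ℤ} (h : β ≤ α) :
    intChoose m α * intChoose (m + 1) β ≤ intChoose (m + 1) α * intChoose m β := by
  rcases lt_or_ge β 0 with hβ | hβ
  · simp [intChoose_eq_zero (Or.inl hβ)]
  lift β to ℕ using hβ
  lift α to ℕ using (by omega)
  simp only [intChoose_natCast]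
  exact_mod_cast choose_mul_choose_succ_le m (by omega)

lemma intChoose_succ_add_one_mul_intChoose_le (m : ℕ) {α β : ℤ} (h : β ≤ α) :
    intChoose (m + 1) (α + 1) * intChoose m β ≤ intChoose (m + 1) (β + 1) * intChoose m α := by
  rcases lt_or_ge β 0 with hβ | hβ
  · rw [intChoose_eq_zero (Or.inl hβ), mul_zero]
    exact mul_nonneg (intChoose_nonneg _ _) (intChoose_nonneg _ _)
  lift β to ℕ using hβ
  lift α to ℕ using (by omega)
  simp only [← Nat.cast_add_one, intChoose_natCast]
  exact_mod_cast choose_succ_mul_choose_le m (by omega)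

lemma intChoose_natCast_sub (m b k : ℕ) :
    intChoose m ((b : ℤ) - k) = if k ≤ b then (m.choose (b - k) : ℝ) else 0 := by
  split_ifs with h
  · rw [← Nat.cast_sub h, intChoose_natCast]
  · exact intChoose_eq_zero (Or.inl (by omega))

lemma sum_Icc_intChoose_add_two_le (m : ℕ) (P R : ℤ) :
    ∑ i ∈ Icc (P - R) R, intChoose (m + 2) i * intChoose m (P - i) ≤
      ∑ i ∈ Icc (P - R) R, intChoose (m + 1) i * intChoose (m + 1) (P - i) := by
  rcases lt_or_ge R (P - R) with hR | hR
  · simp [Icc_eq_empty_of_lt hR]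
  set φ : ℤ → ℝ := fun i ↦ intChoose (m + 1) (i - 1) * intChoose m (P - i)
  have hstep : ∀ i, intChoose (m + 1) i * intChoose (m + 1) (P - i) -
      intChoose (m + 2) i * intChoose m (P - i) = φ (i + 1) - φ i := by
    intro i
    simp only [φ, intChoose_succ (m + 1) i, intChoose_succ m (P - i), add_sub_cancel_right,
      sub_add_eq_sub_sub]
    ring
  rw [← sub_nonneg, ← sum_sub_distrib, sum_congr rfl fun i _ ↦ hstep i,
    Int.sum_Icc_sub φ (by omega), sub_nonneg]
  have := intChoose_mul_intChoose_succ_le m (α := R) (β := P - R - 1) (by omega)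
  simp only [φ, sub_sub_cancel, add_sub_cancel_right, sub_sub] at this ⊢
  linarith

lemma sum_Icc_add_one_intChoose_add_two_le (m : ℕ) (P R : ℤ) :
    ∑ i ∈ Icc (P - R + 1) (R + 1), intChoose (m + 2) i * intChoose m (P - i) ≤
      ∑ i ∈ Icc (P - R) R, intChoose (m + 1) i * intChoose (m + 1) (P - i) := by
  rcases lt_or_ge R (P - R) with hR | hR
  · simp [Icc_eq_empty_of_lt hR, Icc_eq_empty_of_lt (by omega : R + 1 < P - R + 1)]
  rw [← map_add_right_Icc, sum_map]
  set ψ : ℤ → ℝ := fun i ↦ intChoose (m + 1) i * intChoose m (P - i)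
  have hstep : ∀ i, intChoose (m + 1) i * intChoose (m + 1) (P - i) -
      intChoose (m + 2) (i + 1) * intChoose m (P - (i + 1)) = ψ i - ψ (i + 1) := by
    intro i
    simp only [ψ, intChoose_succ (m + 1) (i + 1), intChoose_succ m (P - i), add_sub_cancel_right,
      sub_add_eq_sub_sub]
    ring
  rw [← sub_nonneg, ← sum_sub_distrib]
  simp only [addRightEmbedding_apply]
  rw [sum_congr rfl fun i _ ↦ hstep i, Int.sum_Icc_sub' ψ (by omega), sub_nonneg]
  have := intChoose_succ_add_one_mul_intChoose_le m (α := R) (β := P - R - 1) (by omega)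
  rw [show P - R - 1 + 1 = P - R by ring] at this
  simp only [ψ, sub_sub, sub_sub_cancel] at this ⊢
  linarith

lemma sum_window_intChoose_le (m : ℕ) (P r R : ℤ) :
    ∑ i ∈ Icc (P - r) r ∩ Icc (P - R + 1) (R + 1), intChoose (m + 2) i * intChoose m (P - i) ≤
      ∑ i ∈ Icc (P - r) r ∩ Icc (P - R) R, intChoose (m + 1) i * intChoose (m + 1) (P - i) := by
  have hA : ∀ i, 0 ≤ intChoose (m + 2) i * intChoose m (P - i) := fun i ↦
    mul_nonneg (intChoose_nonneg _ _) (intChoose_nonneg _ _)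
  rcases le_or_gt r R with hrR | hRr
  · rw [inter_eq_left.2 (Icc_subset_Icc (by omega) hrR)]
    exact (sum_le_sum_of_subset_of_nonneg inter_subset_left fun i _ _ ↦ hA i).trans
      (sum_Icc_intChoose_add_two_le m P r)
  · rw [inter_eq_right.2 (Icc_subset_Icc (by omega) hRr.le)]
    exact (sum_le_sum_of_subset_of_nonneg inter_subset_right fun i _ _ ↦ hA i).trans
      (sum_Icc_add_one_intChoose_add_two_le m P R)

structure IsSymmUnimodal (g : ℤ → ℝ) (P K : ℤ) : Prop where
  symm : ∀ i, g (P - i) = g i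
  succ_le : ∀ r, P ≤ 2 * r → g (r + 1) ≤ g r
  eq_zero_of_lt : ∀ i, K < i → g i = 0

lemma eq_sum_Icc_layers {R : Type*} [Ring R] (g : ℤ → R) {P K : ℤ} (hsymm : ∀ i, g (P - i) = g i)
    (hK : ∀ i, K < i → g i = 0) (i : ℤ) :
    g i = ∑ r ∈ Icc (P - K) K, (g r - g (r + 1)) * if i ∈ Icc (P - r) r then 1 else 0 := by
  simp only [mul_ite, mul_one, mul_zero]
  rw [← sum_filter]
  have hfilter :
      (Icc (P - K) K).filter (fun r ↦ i ∈ Icc (P - r) r) = Icc (max i (P - i)) K := by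
    ext r; simp only [mem_filter, mem_Icc, max_le_iff]; omega
  rw [hfilter]
  rcases le_or_gt (max i (P - i)) K with hiK | hiK
  · rw [Int.sum_Icc_sub' g (by omega), hK (K + 1) (by omega), sub_zero]
    rcases le_total i (P - i) with h | h
    · rw [max_eq_right h, hsymm]
    · rw [max_eq_left h]
  · rw [Icc_eq_empty_of_lt hiK, sum_empty]
    rcases lt_max_iff.1 hiK with h | h
    · exact hK i h
    · rw [← hsymm, hK _ h]

lemma sum_mul_mul_sub_one_le (A B g h : ℤ → ℝ) {P K : ℤ} (hg : IsSymmUnimodal g P K)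
    (hh : IsSymmUnimodal h P K)
    (hAB : ∀ r R, ∑ i ∈ Icc (P - r) r ∩ Icc (P - R + 1) (R + 1), A i ≤
      ∑ i ∈ Icc (P - r) r ∩ Icc (P - R) R, B i) :
    ∑ i ∈ Icc (P - K) K, A i * g i * h (i - 1) ≤ ∑ i ∈ Icc (P - K) K, B i * g i * h i := by
  set S := Icc (P - K) K
  set ind : ℤ → ℤ → ℝ := fun r i ↦ if i ∈ Icc (P - r) r then 1 else 0
  have expand : ∀ (c : ℤ → ℝ) (d : ℤ), ∑ i ∈ S, c i * g i * h (i - d) =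
      ∑ r ∈ S, ∑ R ∈ S, (g r - g (r + 1)) * (h R - h (R + 1)) *
        ∑ i ∈ Icc (P - r) r ∩ Icc (P - R + d) (R + d), c i := by
    intro c d
    have hwin : ∀ r ∈ S, ∀ R, ∑ i ∈ S, c i * ind r i * ind R (i - d) =
        ∑ i ∈ Icc (P - r) r ∩ Icc (P - R + d) (R + d), c i := by
      intro r hr R
      have hrS : Icc (P - r) r ∩ Icc (P - R + d) (R + d) ⊆ S := inter_subset_left.trans
        (Icc_subset_Icc (by linarith [(mem_Icc.1 hr).2]) (mem_Icc.1 hr).2)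
      rw [← inter_eq_right.2 hrS, ← sum_ite_mem]
      refine sum_congr rfl fun i _ ↦ ?_
      simp only [ind, mem_inter, mem_Icc]
      split_ifs <;> first | (simp; done) | (exfalso; omega)
    calc ∑ i ∈ S, c i * g i * h (i - d)
        = ∑ i ∈ S, ∑ r ∈ S, ∑ R ∈ S, (g r - g (r + 1)) * (h R - h (R + 1)) *
            (c i * ind r i * ind R (i - d)) := by
          refine sum_congr rfl fun i _ ↦ ?_
          rw [eq_sum_Icc_layers g hg.symm hg.eq_zero_of_lt i,
            eq_sum_Icc_layers h hh.symm hh.eq_zero_of_lt (i - d), mul_assoc, sum_mul_sum, mul_sum]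
          refine sum_congr rfl fun r _ ↦ ?_
          rw [mul_sum]
          exact sum_congr rfl fun R _ ↦ by ring
      _ = ∑ r ∈ S, ∑ R ∈ S, (g r - g (r + 1)) * (h R - h (R + 1)) *
            ∑ i ∈ Icc (P - r) r ∩ Icc (P - R + d) (R + d), c i :=
          sum_comm.trans <| sum_congr rfl fun r hr ↦ sum_comm.trans <|
            sum_congr rfl fun R _ ↦ by rw [← mul_sum, hwin r hr R]
  have hB := expand B 0
  simp only [sub_zero, add_zero] at hB
  rw [expand A 1, hB]
  refine sum_le_sum fun r _ ↦ sum_le_sum fun R _ ↦ ?_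
  rcases lt_or_ge r (P - r) with hr | hr
  · simp [Icc_eq_empty_of_lt hr]
  rcases lt_or_ge R (P - R) with hR | hR
  · simp [Icc_eq_empty_of_lt hR, Icc_eq_empty_of_lt (by omega : R + 1 < P - R + 1)]
  exact mul_le_mul_of_nonneg_left (hAB r R)
    (mul_nonneg (sub_nonneg.2 (hg.succ_le r (by omega))) (sub_nonneg.2 (hh.succ_le R (by omega))))

structure IsLogConcave_s19 (F : ℤ → ℝ) : Prop where
  nonneg : ∀ k, 0 ≤ F k
  mul_le_sq : ∀ k, F k * F (k + 2) ≤ F (k + 1) ^ 2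
  ne_zero_of_lt_of_lt : ∀ i j k, i < j → j < k → F i ≠ 0 → F k ≠ 0 → F j ≠ 0

namespace IsLogConcave_s19

variable {F : ℤ → ℝ}

lemma mul_le_mul_of_le (hF : IsLogConcave_s19 F) {s t : ℤ} (hst : s ≤ t) :
    F (s - 1) * F (t + 1) ≤ F s * F t := by
  have hprod : 0 ≤ F s * F t := mul_nonneg (hF.nonneg s) (hF.nonneg t)
  rcases eq_or_ne (F (s - 1)) 0 with h | hs
  · rwa [h, zero_mul]
  rcases eq_or_ne (F (t + 1)) 0 with h | ht
  · rwa [h, mul_zero]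
  have hpos : ∀ u, s ≤ u → u ≤ t → 0 < F u := fun u h₁ h₂ ↦
    (hF.nonneg u).lt_of_ne' (hF.ne_zero_of_lt_of_lt _ u _ (by omega) (by omega) hs ht)
  suffices ∀ u, s ≤ u → u ≤ t → F (s - 1) * F (u + 1) ≤ F s * F u from this t hst le_rfl
  intro u hu
  induction u, hu using Int.leInduction with
  | base =>
    intro _
    have h := hF.mul_le_sq (s - 1)
    rwa [sub_add_cancel, show s - 1 + 2 = s + 1 by ring, sq] at h
  | succ u hsu ih =>
    intro hut
    have hu₀ := hpos u hsu (by omega)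
    have hu₁ := hpos (u + 1) (by omega) hut
    refine le_of_mul_le_mul_right ?_ (mul_pos hu₀ hu₁)
    calc F (s - 1) * F (u + 1 + 1) * (F u * F (u + 1))
        = F (s - 1) * F (u + 1) * (F u * F (u + 2)) := by ring_nf
      _ ≤ F s * F u * F (u + 1) ^ 2 :=
        mul_le_mul (ih (by omega)) (hF.mul_le_sq u) (mul_nonneg (hF.nonneg _) (hF.nonneg _))
          (mul_nonneg (hF.nonneg _) (hF.nonneg _))
      _ = F s * F (u + 1) * (F u * F (u + 1)) := by ring

lemma indicator_Icc (hF : IsLogConcave_s19 F) (a b : ℤ) :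
    IsLogConcave_s19 ((Set.Icc a b).indicator F) where
  nonneg k := Set.indicator_nonneg (fun k _ ↦ hF.nonneg k) k
  mul_le_sq k := by
    by_cases hk : k ∈ Set.Icc a b ∧ k + 2 ∈ Set.Icc a b
    · simp only [Set.mem_Icc] at hk
      rw [Set.indicator_of_mem (by simp; omega), Set.indicator_of_mem (by simp; omega),
        Set.indicator_of_mem (by simp; omega)]
      exact hF.mul_le_sq k
    · rw [not_and_or] at hk
      rcases hk with hk | hk <;> simp [Set.indicator_of_notMem hk, sq_nonneg]
  ne_zero_of_lt_of_lt i j k hij hjk hi hk := by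
    obtain ⟨hia, hi⟩ := Set.indicator_apply_ne_zero.1 hi
    obtain ⟨hka, hk⟩ := Set.indicator_apply_ne_zero.1 hk
    have hja : j ∈ Set.Icc a b := ⟨hia.1.trans hij.le, hjk.le.trans hka.2⟩
    rw [Set.indicator_of_mem hja]
    exact hF.ne_zero_of_lt_of_lt i j k hij hjk hi hk

lemma comp_sub (hF : IsLogConcave_s19 F) (c : ℤ) : IsLogConcave_s19 fun k ↦ F (c - k) where
  nonneg k := hF.nonneg _
  mul_le_sq k := by
    have h := hF.mul_le_sq (c - (k + 2))
    rwa [show c - (k + 2) + 1 = c - (k + 1) by ring, show c - (k + 2) + 2 = c - k by ring,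
      mul_comm] at h
  ne_zero_of_lt_of_lt i j k hij hjk hi hk :=
    hF.ne_zero_of_lt_of_lt (c - k) (c - j) (c - i) (by omega) (by omega) hk hi

lemma isSymmUnimodal_mul_sub (hF : IsLogConcave_s19 F) {P K : ℤ} (hK : ∀ i, K < i → F i = 0) :
    IsSymmUnimodal (fun i ↦ F i * F (P - i)) P K where
  symm i := by simp only [sub_sub_cancel, mul_comm]
  succ_le r hr := by
    have := hF.mul_le_mul_of_le (s := P - r) (t := r) (by omega)
    simp only [show P - (r + 1) = P - r - 1 by ring]
    linarith
  eq_zero_of_lt i hi := by simp only [hK i hi, zero_mul]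

lemma isSymmUnimodal_sub_mul (hF : IsLogConcave_s19 F) {c P K : ℤ} (hc : c ≤ K)
    (h0 : ∀ i, i < 0 → F i = 0) : IsSymmUnimodal (fun i ↦ F (c - i) * F (c - P + i)) P K where
  symm i := by
    rw [mul_comm]; congr 2 <;> ring
  succ_le r hr := by
    have := hF.mul_le_mul_of_le (s := c - r) (t := c - P + r) (by omega)
    convert this using 3 <;> ring
  eq_zero_of_lt i hi := by simp only [h0 (c - i) (by omega), zero_mul]

end IsLogConcave_s19

lemma extend_natCast_of_neg (x : ℕ → ℝ) {k : ℤ} (hk : k < 0) :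
    Function.extend ((↑) : ℕ → ℤ) x 0 k = 0 :=
  Function.extend_apply' _ _ _ (by rintro ⟨n, rfl⟩; omega)

lemma isLogConcave_extend_natCast {x : ℕ → ℝ} (h0 : ∀ k, 0 ≤ x k)
    (hlc : ∀ k, x k * x (k + 2) ≤ x (k + 1) ^ 2)
    (hniz : ∀ i j k, i < j → j < k → x i ≠ 0 → x k ≠ 0 → x j ≠ 0) :
    IsLogConcave_s19 (Function.extend ((↑) : ℕ → ℤ) x 0) := by
  set E := Function.extend ((↑) : ℕ → ℤ) x 0
  have hE : ∀ n : ℕ, E n = x n := Nat.cast_injective.extend_apply x 0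
  have hE0 : ∀ k : ℤ, k < 0 → E k = 0 := fun _ ↦ extend_natCast_of_neg x
  refine ⟨fun k ↦ ?_, fun k ↦ ?_, fun i j k hij hjk hi hk ↦ ?_⟩
  · rcases lt_or_ge k 0 with hk | hk
    · rw [hE0 k hk]
    · lift k to ℕ using hk
      rw [hE]; exact h0 k
  · rcases lt_or_ge k 0 with hk | hk
    · rw [hE0 k hk, zero_mul]; positivity
    · lift k to ℕ using hk
      have h₁ : (k : ℤ) + 1 = (k + 1 : ℕ) := by push_cast; ring
      have h₂ : (k : ℤ) + 2 = (k + 2 : ℕ) := by push_cast; ring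
      rw [h₁, h₂, hE, hE, hE]; exact hlc k
  · have hi0 : 0 ≤ i := not_lt.1 fun h ↦ hi (hE0 i h)
    lift i to ℕ using hi0
    lift j to ℕ using (by omega)
    lift k to ℕ using (by omega)
    rw [hE] at hi hk ⊢
    exact hniz i j k (by omega) (by omega) hi hk

noncomputable def binomialConv (X Y : ℤ → ℝ) (M : ℕ) : ℝ :=
  ∑ k ∈ Icc 0 (M : ℤ), intChoose M k * X k * Y (M - k)

lemma binomialConv_mul_le_sq_of_support {X Y : ℤ → ℝ} (hX : IsLogConcave_s19 X)
    (hY : IsLogConcave_s19 Y) (M : ℕ) (hXs : Function.support X ⊆ Set.Icc 0 (M + 2))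
    (hYs : Function.support Y ⊆ Set.Icc 0 (M + 2)) :
    binomialConv X Y M * binomialConv X Y (M + 2) ≤ binomialConv X Y (M + 1) ^ 2 := by
  set K : ℤ := M + 2
  have hX0 : ∀ i, K < i → X i = 0 := fun i hi ↦
    Function.notMem_support.1 fun h ↦ by have := (hXs h).2; omega
  have hY0 : ∀ i, i < 0 → Y i = 0 := fun i hi ↦
    Function.notMem_support.1 fun h ↦ by have := (hYs h).1; omega
  set T : ℕ → ℤ → ℝ := fun N k ↦ intChoose N k * X k * Y (N - k)
  have hTN : ∀ N : ℕ, Function.support (T N) ⊆ Set.Icc 0 N := fun N k hk ↦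
    support_intChoose_subset N (left_ne_zero_of_mul (left_ne_zero_of_mul hk))
  have hTs : ∀ N : ℕ, N ≤ M + 2 → Function.support (T N) ⊆ Set.Icc 0 K := fun N hN ↦
    (hTN N).trans (Set.Icc_subset_Icc le_rfl (by omega))
  have hT : ∀ N : ℕ, N ≤ M + 2 → binomialConv X Y N = ∑ k ∈ Icc 0 K, T N k := fun N hN ↦
    sum_eq_sum_of_support_subset (T N) (by simpa using hTN N) (by simpa using hTs N hN)
  rw [mul_comm, hT M (by omega), hT (M + 2) le_rfl, hT (M + 1) (by omega), sq,
    sum_Icc_mul_sum_Icc _ _ (hTs _ le_rfl) (hTs _ (by omega)),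
    sum_Icc_mul_sum_Icc _ _ (hTs _ (by omega)) (hTs _ (by omega))]
  refine sum_le_sum fun P _ ↦ ?_
  -- The terms with `i + k = P` factor as binomials times `g i` times `h (i - 1)` (for
  -- `W_(M+2) W_M`) or `h i` (for `W_(M+1)^2`).
  set g : ℤ → ℝ := fun i ↦ X i * X (P - i)
  set h : ℤ → ℝ := fun i ↦ Y (M + 1 - i) * Y (M + 1 - P + i)
  have hg : IsSymmUnimodal g P K := hX.isSymmUnimodal_mul_sub hX0
  have hh : IsSymmUnimodal h P K := hY.isSymmUnimodal_sub_mul (by omega) hY0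
  have key := sum_mul_mul_sub_one_le (fun i ↦ intChoose (M + 2) i * intChoose M (P - i))
    (fun i ↦ intChoose (M + 1) i * intChoose (M + 1) (P - i)) g h hg hh
    (sum_window_intChoose_le M P)
  refine (sum_congr rfl fun i _ ↦ ?_).trans_le (key.trans_eq (sum_congr rfl fun i _ ↦ ?_)) <;>
    simp only [T, g, h] <;> push_cast <;> ring_nf

theorem binomialConv_mul_le_sq {X Y : ℤ → ℝ} (hX : IsLogConcave_s19 X) (hY : IsLogConcave_s19 Y)
    (M : ℕ) : binomialConv X Y M * binomialConv X Y (M + 2) ≤ binomialConv X Y (M + 1) ^ 2 := by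
  set I := Set.Icc (0 : ℤ) (M + 2)
  have htrunc : ∀ N : ℕ, N ≤ M + 2 →
      binomialConv X Y N = binomialConv (I.indicator X) (I.indicator Y) N := by
    intro N hN
    refine sum_congr rfl fun k hk ↦ ?_
    rw [mem_Icc] at hk
    rw [Set.indicator_of_mem (by simp only [I, Set.mem_Icc]; omega),
      Set.indicator_of_mem (by simp only [I, Set.mem_Icc]; omega)]
  rw [htrunc M (by omega), htrunc (M + 1) (by omega), htrunc (M + 2) le_rfl]
  exact binomialConv_mul_le_sq_of_support (hX.indicator_Icc _ _) (hY.indicator_Icc _ _) M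
    Set.support_indicator_subset Set.support_indicator_subset

lemma sum_range_choose_eq_binomialConv (a b n : ℕ) (x y : ℕ → ℝ) (hn : n ≤ a) :
    ∑ k ∈ range (n + 1), (if k ≤ b then ((a - n).choose (b - k) : ℝ) else 0) * x k * y (n - k) =
      binomialConv (fun k ↦ Function.extend ((↑) : ℕ → ℤ) x 0 (b - k))
        (fun j ↦ Function.extend ((↑) : ℕ → ℤ) y 0 (a - b - j)) (a - n) := by
  set Ex := Function.extend ((↑) : ℕ → ℤ) x 0
  set Ey := Function.extend ((↑) : ℕ → ℤ) y 0
  set F : ℤ → ℝ := fun k ↦ intChoose (a - n) (b - k) * Ex k * Ey (n - k)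
  have hleft : ∑ k ∈ range (n + 1),
      (if k ≤ b then ((a - n).choose (b - k) : ℝ) else 0) * x k * y (n - k) =
      ∑ k ∈ Icc 0 (n : ℤ), F k := by
    refine sum_nbij' (fun k ↦ (k : ℤ)) Int.toNat (fun k hk ↦ ?_) (fun k hk ↦ ?_)
      (fun k _ ↦ Int.toNat_natCast k) (fun k hk ↦ Int.toNat_of_nonneg (mem_Icc.1 hk).1)
      (fun k hk ↦ ?_)
    · simp only [mem_range, mem_Icc] at hk ⊢; omega
    · simp only [mem_range, mem_Icc] at hk ⊢; omega
    · rw [mem_range] at hk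
      simp only [F, Ex, Ey, intChoose_natCast_sub, ← Nat.cast_sub (by omega : k ≤ n),
        Nat.cast_injective.extend_apply]
  have hright : binomialConv (fun k ↦ Ex (b - k)) (fun j ↦ Ey (a - b - j)) (a - n) =
      ∑ k ∈ Icc 0 ((a - n : ℕ) : ℤ), F (b - k) := by
    refine sum_congr rfl fun k _ ↦ ?_
    simp only [F, sub_sub_cancel, Nat.cast_sub hn]
    ring_nf
  rw [hleft, hright, ← finsum_eq_sum_of_support_subset F, ← finsum_eq_sum_of_support_subset,
    ← finsum_comp_equiv (Equiv.subLeft (b : ℤ))]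
  · rfl
  · intro k hk
    obtain ⟨h₁, h₂⟩ := support_intChoose_subset _ (left_ne_zero_of_mul (left_ne_zero_of_mul hk))
    simp only [coe_Icc, Set.mem_Icc]
    omega
  · intro k hk
    have h₁ := right_ne_zero_of_mul (left_ne_zero_of_mul hk)
    have h₂ := right_ne_zero_of_mul hk
    simp only [coe_Icc, Set.mem_Icc]
    constructor
    · exact not_lt.1 fun h ↦ h₁ (extend_natCast_of_neg x h)
    · exact not_lt.1 fun h ↦ h₂ (extend_natCast_of_neg y (by omega))

theorem stmt_19_general (a b : ℕ) (x y : ℕ → ℝ)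
    (hxnonneg : ∀ k, 0 ≤ x k) (hynonneg : ∀ k, 0 ≤ y k)
    (hxlc : ∀ k : ℕ, x k * x (k + 2) ≤ x (k + 1) ^ 2)
    (hylc : ∀ k : ℕ, y k * y (k + 2) ≤ y (k + 1) ^ 2)
    (hxniz : ∀ i j k : ℕ, i < j → j < k → x i ≠ 0 → x k ≠ 0 → x j ≠ 0)
    (hyniz : ∀ i j k : ℕ, i < j → j < k → y i ≠ 0 → y k ≠ 0 → y j ≠ 0)
    (z : ℕ → ℝ)
    (hz : ∀ n : ℕ, n ≤ a → z n = ∑ k ∈ Finset.range (n + 1),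
      (if k ≤ b then ((a - n).choose (b - k) : ℝ) else 0) * x k * y (n - k)) :
    ∀ n : ℕ, n + 2 ≤ a → z n * z (n + 2) ≤ z (n + 1) ^ 2 := by
  intro n hn
  have hX := (isLogConcave_extend_natCast hxnonneg hxlc hxniz).comp_sub b
  have hY := (isLogConcave_extend_natCast hynonneg hylc hyniz).comp_sub (a - b)
  have hzW : ∀ m ≤ a, z m = binomialConv _ _ (a - m) := fun m hm ↦
    (hz m hm).trans (sum_range_choose_eq_binomialConv a b m x y hm)
  rw [hzW n (by omega), hzW (n + 1) (by omega), hzW (n + 2) hn, mul_comm,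
    show a - n = a - (n + 2) + 2 by omega, show a - (n + 1) = a - (n + 2) + 1 by omega]
  exact binomialConv_mul_le_sq hX hY (a - (n + 2))

/-- Corollary 3.8: for integers `a ≥ b ≥ 0`, if `x`, `y` are
nonnegative log-concave sequences (no internal zeros), then the sequence
`z n = ∑_{k=0}^n C(a-n, b-k) x_k y_{n-k}` (where `C(m,j) = 0` unless
`0 ≤ j ≤ m`, so the term vanishes when `k > b`), defined for `0 ≤ n ≤ a`,
is log-concave. -/
theorem stmt_19 (a b : ℕ) (hab : b ≤ a) (x y : ℕ → ℝ)
    (hxnonneg : ∀ k, 0 ≤ x k) (hynonneg : ∀ k, 0 ≤ y k)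
    (hxlc : ∀ k : ℕ, x k * x (k + 2) ≤ x (k + 1) ^ 2)
    (hylc : ∀ k : ℕ, y k * y (k + 2) ≤ y (k + 1) ^ 2)
    (hxniz : ∀ i j k : ℕ, i < j → j < k → x i ≠ 0 → x k ≠ 0 → x j ≠ 0)
    (hyniz : ∀ i j k : ℕ, i < j → j < k → y i ≠ 0 → y k ≠ 0 → y j ≠ 0)
    (z : ℕ → ℝ)
    (hz : ∀ n : ℕ, n ≤ a → z n = ∑ k ∈ Finset.range (n + 1),
      (if k ≤ b then ((a - n).choose (b - k) : ℝ) else 0) * x k * y (n - k)) :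
    ∀ n : ℕ, n + 2 ≤ a → z n * z (n + 2) ≤ z (n + 1) ^ 2 :=
  stmt_19_general a b x y hxnonneg hynonneg hxlc hylc hxniz hyniz z hz
end
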